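/- arXiv:1512.04277 — 10 statements merged into one kernel-verified Lean document; each statement's English description precedes it below -/
import Mathlib

section
/- Let (A,p) be a bribeproof mechanism on a domain Θ = Θ_1 × ⋯ × Θ_n. If θ', θ'' ∈ Θ differ in at most one agent's coordinate (i.e., θ'' = (θ''_i, θ'_{−i}) for some agent i) and A(θ') = A(θ''), then p(θ') = p(θ''), i.e., the payments of every agent coincide at θ' and θ''. -/
open Function Finset

noncomputable section

/-- Utility of agent `i` with true per-unit cost `t` when the reported vector is `θhat`. -/
def utility {n : ℕ} (A p : (Fin n → ℝ) → Fin n → ℝ) (θhat : Fin n → ℝ) (i : Fin n) (t : ℝ) : ℝ :=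
  p θhat i - A θhat i * t

/-- `θ` belongs to the product domain `Θ = Θ_1 × ⋯ × Θ_n`. -/
def InDomain {n : ℕ} (Θ : Fin n → Set ℝ) (θ : Fin n → ℝ) : Prop := ∀ k, θ k ∈ Θ k

/-- Bribeproofness: no agent `j` can bribe an agent `i` into a unilateral misreport
so that their joint utility improves (taking `i = j` gives strategyproofness). -/
def Bribeproof {n : ℕ} (Θ : Fin n → Set ℝ) (A p : (Fin n → ℝ) → Fin n → ℝ) : Prop :=
  ∀ θ, InDomain Θ θ → ∀ i j : Fin n, ∀ x ∈ Θ i,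
    utility A p θ i (θ i) + utility A p θ j (θ j) ≥
      utility A p (Function.update θ i x) i (θ i) +
        utility A p (Function.update θ i x) j (θ j)

/-- Strong bribeproofness: additionally no two distinct agents can jointly misreport
so that their joint utility improves. -/
def StronglyBribeproof {n : ℕ} (Θ : Fin n → Set ℝ) (A p : (Fin n → ℝ) → Fin n → ℝ) : Prop :=
  Bribeproof Θ A p ∧
    ∀ θ, InDomain Θ θ → ∀ i j : Fin n, i ≠ j → ∀ x ∈ Θ i, ∀ y ∈ Θ j,
      utility A p θ i (θ i) + utility A p θ j (θ j) ≥
        utility A p (Function.update (Function.update θ i x) j y) i (θ i) +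
          utility A p (Function.update (Function.update θ i x) j y) j (θ j)

/-- Collusion-proofness: no coalition `C` can improve its total utility by a joint
misreport of the types of (some of) its members. -/
def CollusionProof {n : ℕ} (Θ : Fin n → Set ℝ) (A p : (Fin n → ℝ) → Fin n → ℝ) : Prop :=
  ∀ θ, InDomain Θ θ → ∀ C : Finset (Fin n), ∀ θhat, InDomain Θ θhat →
    (∀ k, k ∉ C → θhat k = θ k) →
    ∑ i ∈ C, utility A p θ i (θ i) ≥ ∑ i ∈ C, utility A p θhat i (θ i)

/-- `Δ^i_k(θ_{-i}) = A_k(L, θ_{-i}) - A_k(H, θ_{-i})`. -/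
def Delta {n : ℕ} (A : (Fin n → ℝ) → Fin n → ℝ) (L H : ℝ) (θ : Fin n → ℝ) (i k : Fin n) : ℝ :=
  A (Function.update θ i L) k - A (Function.update θ i H) k

theorem stmt_0 {n : ℕ} (hn : 2 ≤ n) (Θ : Fin n → Set ℝ)
    (A p : (Fin n → ℝ) → Fin n → ℝ) (hbp : Bribeproof Θ A p)
    (θ' θ'' : Fin n → ℝ) (h' : InDomain Θ θ') (h'' : InDomain Θ θ'')
    (i : Fin n) (hdiff : θ'' = Function.update θ' i (θ'' i))
    (hA : A θ' = A θ'') : p θ' = p θ'' := by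
  have hup : Function.update θ'' i (θ' i) = θ' := by
    rw [hdiff, Function.update_idem, Function.update_eq_self]
  have key : ∀ j : Fin n, p θ' i + p θ' j = p θ'' i + p θ'' j := by
    intro j
    have h1 := hbp θ' h' i j (θ'' i) (h'' i)
    have h2 := hbp θ'' h'' i j (θ' i) (h' i)
    rw [← hdiff] at h1
    rw [hup] at h2
    simp only [utility] at h1 h2
    have hAi : A θ' i = A θ'' i := by rw [hA]
    have hAj : A θ' j = A θ'' j := by rw [hA]
    rw [hAi, hAj] at h1 h2
    linarith
  funext j
  have hi := key i
  have hj := key j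
  linarith
end
end

section
/- Fix reals L < H and let (A,p) be a (1/2)-linear mechanism on the two-values domain {L,H}^n. Then (A,p) is bribeproof if and only if A satisfies bounded influence: for all θ ∈ {L,H}^n and all agents i, j, Δ^i_i(θ_{−i}) ≥ |Δ^i_j(θ_{−i})|. -/
open Function Finset

noncomputable section

theorem stmt_2 {n : ℕ} (hn : 2 ≤ n) (L H : ℝ) (hLH : L < H)
    (A p : (Fin n → ℝ) → Fin n → ℝ) (f : Fin n → ℝ)
    (hp : ∀ θ, InDomain (fun _ => ({L, H} : Set ℝ)) θ → ∀ i,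
      p θ i = ((L + H) / 2) * A θ i + f i) :
    Bribeproof (fun _ => ({L, H} : Set ℝ)) A p ↔
      ∀ θ, InDomain (fun _ => ({L, H} : Set ℝ)) θ → ∀ i j : Fin n,
        Delta A L H θ i i ≥ |Delta A L H θ i j| := by
  have hd : (0:ℝ) < H - L := sub_pos.mpr hLH
  have hdom : ∀ (θ : Fin n → ℝ), InDomain (fun _ => ({L, H} : Set ℝ)) θ →
      ∀ (i : Fin n) (x : ℝ), x ∈ ({L, H} : Set ℝ) →
      InDomain (fun _ => ({L, H} : Set ℝ)) (Function.update θ i x) := by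
    intro θ hθ i x hx k
    rcases eq_or_ne k i with h | h
    · subst h; simpa using hx
    · simpa [Function.update_of_ne h] using hθ k
  have hu : ∀ θ, InDomain (fun _ => ({L, H} : Set ℝ)) θ → ∀ (i : Fin n) (t : ℝ),
      utility A p θ i t = ((L + H) / 2 - t) * A θ i + f i := by
    intro θ hθ i t
    simp only [utility]
    rw [hp θ hθ i]; ring
  constructor
  · intro hb θ hθ i j
    have hL : (L : ℝ) ∈ ({L, H} : Set ℝ) := by simp
    have hH : (H : ℝ) ∈ ({L, H} : Set ℝ) := by simp
    set θL := Function.update θ i L with hθLdef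
    set θH := Function.update θ i H with hθHdef
    have hdL : InDomain (fun _ => ({L, H} : Set ℝ)) θL := hdom θ hθ i L hL
    have hdH : InDomain (fun _ => ({L, H} : Set ℝ)) θH := hdom θ hθ i H hH
    have hLi : θL i = L := Function.update_self i L θ
    have hHi : θH i = H := Function.update_self i H θ
    have hUp : Function.update θL i H = θH := by
      rw [hθLdef, hθHdef, Function.update_idem]
    have hDown : Function.update θH i L = θL := by
      rw [hθLdef, hθHdef, Function.update_idem]
    rcases eq_or_ne j i with rfl | hij
    · have h1 := hb θL hdL j j H hH
      rw [hUp] at h1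
      rw [hu θL hdL j (θL j), hu θH hdH j (θL j), hLi] at h1
      have hnn : Delta A L H θ j j ≥ 0 := by
        simp only [Delta, ← hθLdef, ← hθHdef]
        nlinarith [h1, hd]
      rw [abs_of_nonneg hnn]
    · have h1 := hb θL hdL i j H hH
      have h2 := hb θH hdH i j L hL
      rw [hUp] at h1
      rw [hDown] at h2
      have hjL : θL j = θ j := Function.update_of_ne hij L θ
      have hjH : θH j = θ j := Function.update_of_ne hij H θ
      rw [hu θL hdL i (θL i), hu θL hdL j (θL j), hu θH hdH i (θL i),
        hu θH hdH j (θL j), hLi, hjL] at h1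
      rw [hu θH hdH i (θH i), hu θH hdH j (θH j), hu θL hdL i (θH i),
        hu θL hdL j (θH j), hHi, hjH] at h2
      have hθj := hθ j
      simp only [Set.mem_insert_iff, Set.mem_singleton_iff] at hθj
      rw [ge_iff_le, abs_le]
      simp only [Delta, ← hθLdef, ← hθHdef]
      rcases hθj with hj | hj <;> rw [hj] at h1 h2 <;>
        exact ⟨by nlinarith [h1, h2, hd], by nlinarith [h1, h2, hd]⟩
  · intro hΔ θ hθ i j x hx
    have hθi := hθ i
    simp only [Set.mem_insert_iff, Set.mem_singleton_iff] at hθi hx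
    have hii := hΔ θ hθ i i
    have hij := hΔ θ hθ i j
    simp only [Delta] at hii hij
    have hθj := hθ j
    simp only [Set.mem_insert_iff, Set.mem_singleton_iff] at hθj
    rcases hθi with hθiL | hθiH
    · have hθeq : Function.update θ i L = θ := by
        rw [← hθiL]; exact Function.update_eq_self i θ
      rcases hx with hxL | hxH
      · rw [hxL, hθeq]
      · rw [hθeq] at hii hij
        rw [hxH]
        set θh := Function.update θ i H with hθhdef
        have hdh : InDomain (fun _ => ({L, H} : Set ℝ)) θh :=
          hdom θ hθ i H (by simp)
        rw [hu θ hθ i (θ i), hu θ hθ j (θ j), hu θh hdh i (θ i),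
          hu θh hdh j (θ j), hθiL]
        rcases hθj with hj | hj <;> rw [hj] <;>
          nlinarith [hii, hij, le_abs_self (A θ j - A θh j),
            neg_abs_le (A θ j - A θh j), abs_nonneg (A θ i - A θh i), hd]
    · have hθeq : Function.update θ i H = θ := by
        rw [← hθiH]; exact Function.update_eq_self i θ
      rcases hx with hxL | hxH
      · rw [hθeq] at hii hij
        rw [hxL]
        set θl := Function.update θ i L with hθldef
        have hdl : InDomain (fun _ => ({L, H} : Set ℝ)) θl :=
          hdom θ hθ i L (by simp)
        rw [hu θ hθ i (θ i), hu θ hθ j (θ j), hu θl hdl i (θ i),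
          hu θl hdl j (θ j), hθiH]
        rcases hθj with hj | hj <;> rw [hj] <;>
          nlinarith [hii, hij, le_abs_self (A θl j - A θ j),
            neg_abs_le (A θl j - A θ j), abs_nonneg (A θl i - A θ i), hd]
      · rw [hxH, hθeq]
end
end

section
/- Fix reals L < H. If a mechanism (A,p) on the two-values domain {L,H}^n is strongly bribeproof, then for all θ ∈ {L,H}^n and all distinct agents i, j: (i) A_i(L,L,θ_{−ij}) + A_j(L,L,θ_{−ij}) ≥ A_i(H,H,θ_{−ij}) + A_j(H,H,θ_{−ij}); and (ii) A_i(L,H,θ_{−ij}) − A_j(L,H,θ_{−ij}) ≥ A_i(H,L,θ_{−ij}) − A_j(H,L,θ_{−ij}); where (x,y,θ_{−ij}) denotes θ with its i-th entry replaced by x and its j-th entry replaced by y. -/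
open Function Finset

noncomputable section

theorem stmt_3 {n : ℕ} (hn : 2 ≤ n) (L H : ℝ) (hLH : L < H)
    (A p : (Fin n → ℝ) → Fin n → ℝ)
    (hsbp : StronglyBribeproof (fun _ => ({L, H} : Set ℝ)) A p) :
    ∀ θ, InDomain (fun _ => ({L, H} : Set ℝ)) θ → ∀ i j : Fin n, i ≠ j →
      (A (Function.update (Function.update θ i L) j L) i +
          A (Function.update (Function.update θ i L) j L) j ≥
        A (Function.update (Function.update θ i H) j H) i +
          A (Function.update (Function.update θ i H) j H) j) ∧
      (A (Function.update (Function.update θ i L) j H) i -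
          A (Function.update (Function.update θ i L) j H) j ≥
        A (Function.update (Function.update θ i H) j L) i -
          A (Function.update (Function.update θ i H) j L) j) := by
  intro θ hθ i j hij
  obtain ⟨-, hs⟩ := hsbp
  set Θ : Fin n → Set ℝ := fun _ => ({L, H} : Set ℝ) with hΘ
  have hL : L ∈ ({L, H} : Set ℝ) := Or.inl rfl
  have hHm : H ∈ ({L, H} : Set ℝ) := Or.inr rfl
  -- double update vector
  have hdom : ∀ x ∈ ({L, H} : Set ℝ), ∀ y ∈ ({L, H} : Set ℝ),
      InDomain Θ (Function.update (Function.update θ i x) j y) := by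
    intro x hx y hy k
    rcases eq_or_ne k j with rfl | hkj
    · simpa [hΘ] using hy
    rcases eq_or_ne k i with rfl | hki
    · simp [Function.update_of_ne hkj, hx, hΘ]
    · simp [Function.update_of_ne hkj, Function.update_of_ne hki, hΘ]; exact hθ k
  have hover : ∀ x y x' y' : ℝ,
      Function.update (Function.update (Function.update (Function.update θ i x) j y) i x') j y'
        = Function.update (Function.update θ i x') j y' := by
    intro x y x' y'
    funext k
    rcases eq_or_ne k j with rfl | hkj
    · simp
    rcases eq_or_ne k i with rfl | hki
    · simp [Function.update_of_ne hkj]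
    · simp [Function.update_of_ne hkj, Function.update_of_ne hki]
  have hi : ∀ x y : ℝ, Function.update (Function.update θ i x) j y i = x := by
    intro x y; rw [Function.update_of_ne hij, Function.update_self]
  have hj : ∀ x y : ℝ, Function.update (Function.update θ i x) j y j = y := by
    intro x y; rw [Function.update_self]
  have key : ∀ x ∈ ({L, H} : Set ℝ), ∀ y ∈ ({L, H} : Set ℝ),
      ∀ x' ∈ ({L, H} : Set ℝ), ∀ y' ∈ ({L, H} : Set ℝ),
      p (Function.update (Function.update θ i x) j y) i -
          A (Function.update (Function.update θ i x) j y) i * x +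
        (p (Function.update (Function.update θ i x) j y) j -
          A (Function.update (Function.update θ i x) j y) j * y) ≥
      p (Function.update (Function.update θ i x') j y') i -
          A (Function.update (Function.update θ i x') j y') i * x +
        (p (Function.update (Function.update θ i x') j y') j -
          A (Function.update (Function.update θ i x') j y') j * y) := by
    intro x hx y hy x' hx' y' hy'
    have h := hs (Function.update (Function.update θ i x) j y) (hdom x hx y hy) i j hij
      x' hx' y' hy'
    rw [hover] at h
    simpa [utility, hi, hj] using h
  constructor
  · have h1 := key L hL L hL H hHm H hHm
    have h2 := key H hHm H hHm L hL L hL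
    nlinarith [h1, h2, sub_pos.mpr hLH]
  · have h1 := key L hL H hHm H hHm L hL
    have h2 := key H hHm L hL L hL H hHm
    nlinarith [h1, h2, sub_pos.mpr hLH]
end
end

section
/- Fix reals L < H and let (A,p) be a (1/2)-linear mechanism on the two-values domain {L,H}^n. Then (A,p) is strongly bribeproof if and only if A satisfies bounded influence (for all θ and all agents i, j: Δ^i_i(θ_{−i}) ≥ |Δ^i_j(θ_{−i})|) together with, for all θ and all distinct agents i, j: A_i(L,L,θ_{−ij}) + A_j(L,L,θ_{−ij}) ≥ A_i(H,H,θ_{−ij}) + A_j(H,H,θ_{−ij}) and A_i(L,H,θ_{−ij}) − A_j(L,H,θ_{−ij}) ≥ A_i(H,L,θ_{−ij}) − A_j(H,L,θ_{−ij}). -/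
open Function Finset

noncomputable section

private lemma aux_nonneg {d a : ℝ} (hd : 0 < d) (h : 0 ≤ d * a) : 0 ≤ a := by
  by_contra hc
  push_neg at hc
  exact absurd h (not_le.mpr (mul_neg_of_pos_of_neg hd hc))

private lemma upd2_eq_self {n : ℕ} (θ : Fin n → ℝ) (i j : Fin n) {a b : ℝ}
    (ha : θ i = a) (hb : θ j = b) :
    Function.update (Function.update θ i a) j b = θ := by
  subst ha; subst hb
  rw [Function.update_eq_self, Function.update_eq_self]

private lemma upd4_collapse {n : ℕ} (θ : Fin n → ℝ) {i j : Fin n} (hij : i ≠ j)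
    (x y x' y' : ℝ) :
    Function.update (Function.update (Function.update (Function.update θ i x) j y) i x') j y' =
      Function.update (Function.update θ i x') j y' := by
  funext k
  rcases eq_or_ne k j with rfl | hkj
  · simp
  · rcases eq_or_ne k i with rfl | hki
    · simp [Function.update_of_ne hkj]
    · simp [Function.update_of_ne hkj, Function.update_of_ne hki]

theorem stmt_4 {n : ℕ} (hn : 2 ≤ n) (L H : ℝ) (hLH : L < H)
    (A p : (Fin n → ℝ) → Fin n → ℝ) (f : Fin n → ℝ)
    (hp : ∀ θ, InDomain (fun _ => ({L, H} : Set ℝ)) θ → ∀ i,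
      p θ i = ((L + H) / 2) * A θ i + f i) :
    StronglyBribeproof (fun _ => ({L, H} : Set ℝ)) A p ↔
      ((∀ θ, InDomain (fun _ => ({L, H} : Set ℝ)) θ → ∀ i j : Fin n,
          Delta A L H θ i i ≥ |Delta A L H θ i j|) ∧
        ∀ θ, InDomain (fun _ => ({L, H} : Set ℝ)) θ → ∀ i j : Fin n, i ≠ j →
          (A (Function.update (Function.update θ i L) j L) i +
              A (Function.update (Function.update θ i L) j L) j ≥
            A (Function.update (Function.update θ i H) j H) i +
              A (Function.update (Function.update θ i H) j H) j) ∧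
          (A (Function.update (Function.update θ i L) j H) i -
              A (Function.update (Function.update θ i L) j H) j ≥
            A (Function.update (Function.update θ i H) j L) i -
              A (Function.update (Function.update θ i H) j L) j)) := by

  have hd : (0:ℝ) < (H - L) / 2 := by linarith
  have hL : L ∈ ({L, H} : Set ℝ) := by simp
  have hH : H ∈ ({L, H} : Set ℝ) := by simp
  have hdom : ∀ (θ : Fin n → ℝ), InDomain (fun _ => ({L, H} : Set ℝ)) θ →
      ∀ (i : Fin n) (x : ℝ), x ∈ ({L, H} : Set ℝ) →
      InDomain (fun _ => ({L, H} : Set ℝ)) (Function.update θ i x) := by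
    intro θ hθ i x hx k
    rcases eq_or_ne k i with rfl | hk
    · simpa using hx
    · simpa [Function.update_of_ne hk] using hθ k
  have hu : ∀ θ, InDomain (fun _ => ({L, H} : Set ℝ)) θ →
      ∀ (i : Fin n) (t : ℝ), utility A p θ i t = ((L + H) / 2 - t) * A θ i + f i := by
    intro θ hθ i t
    simp only [utility, hp θ hθ i]; ring
  constructor
  · rintro ⟨hBP, hS⟩
    constructor
    · -- bounded influence
      intro θ hθ i j
      have hT1 := hdom θ hθ i L hL
      have hT2 := hdom θ hθ i H hH
      have e1 := hBP (Function.update θ i L) hT1 i j H hH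
      have e2 := hBP (Function.update θ i H) hT2 i j L hL
      rw [Function.update_idem] at e1 e2
      simp only [hu _ hT1, hu _ hT2] at e1 e2
      rcases eq_or_ne j i with rfl | hji
      · simp only [Function.update_self] at e1 e2
        have k1 : 0 ≤ (H - L) / 2 *
            (A (Function.update θ j L) j - A (Function.update θ j H) j) := by linarith
        have hnn := aux_nonneg hd k1
        simp only [Delta]
        rw [abs_of_nonneg hnn]
      · simp only [Function.update_self, Function.update_of_ne hji] at e1 e2
        rcases (show θ j = L ∨ θ j = H by simpa using hθ j) with htj | htj
        · rw [htj] at e1 e2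
          have k1 : 0 ≤ (H - L) / 2 *
              ((A (Function.update θ i L) i - A (Function.update θ i H) i) +
               (A (Function.update θ i L) j - A (Function.update θ i H) j)) := by linarith
          have k2 : 0 ≤ (H - L) / 2 *
              ((A (Function.update θ i L) i - A (Function.update θ i H) i) -
               (A (Function.update θ i L) j - A (Function.update θ i H) j)) := by linarith
          have p1 := aux_nonneg hd k1
          have p2 := aux_nonneg hd k2
          simp only [Delta]
          rw [ge_iff_le, abs_le]
          constructor <;> linarith
        · rw [htj] at e1 e2
          have k1 : 0 ≤ (H - L) / 2 *
              ((A (Function.update θ i L) i - A (Function.update θ i H) i) +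
               (A (Function.update θ i L) j - A (Function.update θ i H) j)) := by linarith
          have k2 : 0 ≤ (H - L) / 2 *
              ((A (Function.update θ i L) i - A (Function.update θ i H) i) -
               (A (Function.update θ i L) j - A (Function.update θ i H) j)) := by linarith
          have p1 := aux_nonneg hd k1
          have p2 := aux_nonneg hd k2
          simp only [Delta]
          rw [ge_iff_le, abs_le]
          constructor <;> linarith
    · -- the two pairwise conditions
      intro θ hθ i j hij
      have dLL := hdom _ (hdom θ hθ i L hL) j L hL
      have dLH := hdom _ (hdom θ hθ i L hL) j H hH
      have dHL := hdom _ (hdom θ hθ i H hH) j L hL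
      have dHH := hdom _ (hdom θ hθ i H hH) j H hH
      have e1 := hS (Function.update (Function.update θ i L) j L) dLL i j hij H hH H hH
      have e2 := hS (Function.update (Function.update θ i L) j H) dLH i j hij H hH L hL
      rw [upd4_collapse θ hij] at e1 e2
      have vi : ∀ x y : ℝ, (Function.update (Function.update θ i x) j y) i = x := by
        intro x y
        rw [Function.update_of_ne hij, Function.update_self]
      have vj : ∀ x y : ℝ, (Function.update (Function.update θ i x) j y) j = y := by
        intro x y; rw [Function.update_self]
      simp only [hu _ dLL, hu _ dLH, hu _ dHL, hu _ dHH, vi, vj] at e1 e2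
      constructor
      · have k : 0 ≤ (H - L) / 2 *
            ((A (Function.update (Function.update θ i L) j L) i +
              A (Function.update (Function.update θ i L) j L) j) -
             (A (Function.update (Function.update θ i H) j H) i +
              A (Function.update (Function.update θ i H) j H) j)) := by linarith
        have := aux_nonneg hd k
        linarith
      · have k : 0 ≤ (H - L) / 2 *
            ((A (Function.update (Function.update θ i L) j H) i -
              A (Function.update (Function.update θ i L) j H) j) -
             (A (Function.update (Function.update θ i H) j L) i -
              A (Function.update (Function.update θ i H) j L) j)) := by linarith
        have := aux_nonneg hd k
        linarith
  · rintro ⟨h1, h2⟩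
    have habs : ∀ t ∈ ({L, H} : Set ℝ), |(L + H) / 2 - t| = (H - L) / 2 := by
      intro t ht
      rcases (show t = L ∨ t = H by simpa using ht) with rfl | rfl
      · rw [abs_of_nonneg (by linarith)]; ring
      · rw [abs_of_nonpos (by linarith)]; ring
    have hBP : Bribeproof (fun _ => ({L, H} : Set ℝ)) A p := by
      intro θ hθ i j x hx
      by_cases hx' : x = θ i
      · rw [hx', Function.update_eq_self]
      · have hT2dom := hdom θ hθ i x hx
        simp only [hu θ hθ, hu _ hT2dom]
        have hΔ := h1 θ hθ i j
        have h5 : |((L + H) / 2 - θ j) * Delta A L H θ i j| =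
            (H - L) / 2 * |Delta A L H θ i j| := by
          rw [abs_mul, habs _ (hθ j)]
        have h6 : -((H - L) / 2 * |Delta A L H θ i j|) ≤
            ((L + H) / 2 - θ j) * Delta A L H θ i j := by
          rw [← h5]; exact neg_abs_le _
        have h6' : ((L + H) / 2 - θ j) * Delta A L H θ i j ≤
            (H - L) / 2 * |Delta A L H θ i j| := by
          rw [← h5]; exact le_abs_self _
        have h7 : (H - L) / 2 * |Delta A L H θ i j| ≤ (H - L) / 2 * Delta A L H θ i i :=
          mul_le_mul_of_nonneg_left hΔ hd.le
        rcases (show θ i = L ∨ θ i = H by simpa using hθ i) with hti | hti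
        · have hx2 : x = H := by
            rcases (show x = L ∨ x = H by simpa using hx) with rfl | rfl
            · exact absurd hti.symm hx'
            · rfl
          rw [hx2] at hT2dom ⊢
          have hθeq : Function.update θ i L = θ := by
            rw [← hti, Function.update_eq_self]
          have hDi : Delta A L H θ i i = A θ i - A (Function.update θ i H) i := by
            simp only [Delta]; rw [hθeq]
          have hDj : Delta A L H θ i j = A θ j - A (Function.update θ i H) j := by
            simp only [Delta]; rw [hθeq]
          rw [hDi] at h7
          rw [hDj] at h6 h7
          rw [hti]
          linarith
        · have hx2 : x = L := by
            rcases (show x = L ∨ x = H by simpa using hx) with rfl | rfl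
            · rfl
            · exact absurd hti.symm hx'
          rw [hx2] at hT2dom ⊢
          have hθeq : Function.update θ i H = θ := by
            rw [← hti, Function.update_eq_self]
          have hDi : Delta A L H θ i i = A (Function.update θ i L) i - A θ i := by
            simp only [Delta]; rw [hθeq]
          have hDj : Delta A L H θ i j = A (Function.update θ i L) j - A θ j := by
            simp only [Delta]; rw [hθeq]
          rw [hDi] at h7
          rw [hDj] at h6' h7
          rw [hti]
          linarith
    refine ⟨hBP, ?_⟩
    intro θ hθ i j hij x hx y hy
    by_cases hxx : x = θ i
    · subst hxx
      rw [Function.update_eq_self]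
      by_cases hyy : y = θ j
      · subst hyy
        rw [Function.update_eq_self]
      · have := hBP θ hθ j i y hy
        linarith
    · by_cases hyy : y = θ j
      · subst hyy
        have hR : Function.update (Function.update θ i x) j (θ j) =
            Function.update θ i x := by
          funext k
          rcases eq_or_ne k j with rfl | hk
          · rw [Function.update_self, Function.update_of_ne (Ne.symm hij)]
          · rw [Function.update_of_ne hk]
        rw [hR]
        exact hBP θ hθ i j x hx
      · have hRdom := hdom _ (hdom θ hθ i x hx) j y hy
        rcases (show θ i = L ∨ θ i = H by simpa using hθ i) with hti | hti <;>
          rcases (show θ j = L ∨ θ j = H by simpa using hθ j) with htj | htj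
        · have hx2 : x = H := by
            rcases (show x = L ∨ x = H by simpa using hx) with rfl | rfl
            · exact absurd hti.symm hxx
            · rfl
          have hy2 : y = H := by
            rcases (show y = L ∨ y = H by simpa using hy) with rfl | rfl
            · exact absurd htj.symm hyy
            · rfl
          rw [hx2, hy2] at hRdom ⊢
          have hb := (h2 θ hθ i j hij).1
          rw [upd2_eq_self θ i j hti htj] at hb
          simp only [hu θ hθ, hu _ hRdom, hti, htj]
          have hm := mul_le_mul_of_nonneg_left hb hd.le
          linarith
        · have hx2 : x = H := by
            rcases (show x = L ∨ x = H by simpa using hx) with rfl | rfl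
            · exact absurd hti.symm hxx
            · rfl
          have hy2 : y = L := by
            rcases (show y = L ∨ y = H by simpa using hy) with rfl | rfl
            · rfl
            · exact absurd htj.symm hyy
          rw [hx2, hy2] at hRdom ⊢
          have hb := (h2 θ hθ i j hij).2
          rw [upd2_eq_self θ i j hti htj] at hb
          simp only [hu θ hθ, hu _ hRdom, hti, htj]
          have hm := mul_le_mul_of_nonneg_left hb hd.le
          linarith
        · have hx2 : x = L := by
            rcases (show x = L ∨ x = H by simpa using hx) with rfl | rfl
            · rfl
            · exact absurd hti.symm hxx
          have hy2 : y = H := by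
            rcases (show y = L ∨ y = H by simpa using hy) with rfl | rfl
            · exact absurd htj.symm hyy
            · rfl
          rw [hx2, hy2] at hRdom ⊢
          have hb := (h2 θ hθ i j hij).2
          rw [upd2_eq_self θ i j hti htj] at hb
          simp only [hu θ hθ, hu _ hRdom, hti, htj]
          have hm := mul_le_mul_of_nonneg_left hb hd.le
          linarith
        · have hx2 : x = L := by
            rcases (show x = L ∨ x = H by simpa using hx) with rfl | rfl
            · rfl
            · exact absurd hti.symm hxx
          have hy2 : y = L := by
            rcases (show y = L ∨ y = H by simpa using hy) with rfl | rfl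
            · rfl
            · exact absurd htj.symm hyy
          rw [hx2, hy2] at hRdom ⊢
          have hb := (h2 θ hθ i j hij).1
          rw [upd2_eq_self θ i j hti htj] at hb
          simp only [hu θ hθ, hu _ hRdom, hti, htj]
          have hm := mul_le_mul_of_nonneg_left hb hd.le
          linarith
end
end

section
/- Fix reals L < H and let (A,p) be a (1/2)-linear mechanism on the two-values domain {L,H}^n whose allocations are binary, i.e., A_k(θ) ∈ {0,1} for all agents k and all θ. Then the following three statements are equivalent: (1) (A,p) is bribeproof; (2) A satisfies monotonicity (Δ^i_i(θ_{−i}) ≥ 0 for all i and θ) and non-bossiness (for all i and θ: if Δ^i_i(θ_{−i}) = 0 then Δ^i_j(θ_{−i}) = 0 for every agent j); (3) (A,p) is strongly bribeproof. -/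
open Function Finset

noncomputable section

theorem stmt_5 {n : ℕ} (hn : 2 ≤ n) (L H : ℝ) (hLH : L < H)
    (A p : (Fin n → ℝ) → Fin n → ℝ) (f : Fin n → ℝ)
    (hp : ∀ θ, InDomain (fun _ => ({L, H} : Set ℝ)) θ → ∀ i,
      p θ i = ((L + H) / 2) * A θ i + f i)
    (hbin : ∀ θ, InDomain (fun _ => ({L, H} : Set ℝ)) θ → ∀ k,
      A θ k = 0 ∨ A θ k = 1) :
    (Bribeproof (fun _ => ({L, H} : Set ℝ)) A p ↔
      ((∀ θ, InDomain (fun _ => ({L, H} : Set ℝ)) θ → ∀ i : Fin n,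
          0 ≤ Delta A L H θ i i) ∧
        ∀ θ, InDomain (fun _ => ({L, H} : Set ℝ)) θ → ∀ i : Fin n,
          Delta A L H θ i i = 0 → ∀ j : Fin n, Delta A L H θ i j = 0)) ∧
    (Bribeproof (fun _ => ({L, H} : Set ℝ)) A p ↔
      StronglyBribeproof (fun _ => ({L, H} : Set ℝ)) A p) := by
  
  have hLmem : L ∈ ({L, H} : Set ℝ) := Set.mem_insert _ _
  have hHmem : H ∈ ({L, H} : Set ℝ) := Set.mem_insert_of_mem _ rfl
  have hdup : ∀ {θ : Fin n → ℝ}, InDomain (fun _ => ({L, H} : Set ℝ)) θ →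
      ∀ (i : Fin n) {x : ℝ}, x ∈ ({L, H} : Set ℝ) →
      InDomain (fun _ => ({L, H} : Set ℝ)) (Function.update θ i x) := by
    intro θ hθ i x hx k
    rcases eq_or_ne k i with rfl | hk
    · simpa using hx
    · simpa [Function.update_of_ne hk] using hθ k
  have hmemLH : ∀ {θ : Fin n → ℝ}, InDomain (fun _ => ({L, H} : Set ℝ)) θ →
      ∀ k, θ k = L ∨ θ k = H := by
    intro θ hθ k
    have := hθ k
    simpa [Set.mem_insert_iff] using this
  have husum : ∀ (θ v : Fin n → ℝ), InDomain (fun _ => ({L, H} : Set ℝ)) v →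
      ∀ i j : Fin n,
      utility A p v i (θ i) + utility A p v j (θ j) =
        ((L + H) / 2 - θ i) * A v i + ((L + H) / 2 - θ j) * A v j + (f i + f j) := by
    intro θ v hv i j
    simp only [utility, hp v hv]
    ring
  -- the core structural inequality from monotonicity + non-bossiness
  have core : (∀ θ, InDomain (fun _ => ({L, H} : Set ℝ)) θ → ∀ i : Fin n,
        0 ≤ Delta A L H θ i i) →
      (∀ θ, InDomain (fun _ => ({L, H} : Set ℝ)) θ → ∀ i : Fin n,
        Delta A L H θ i i = 0 → ∀ j : Fin n, Delta A L H θ i j = 0) →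
      ∀ θ, InDomain (fun _ => ({L, H} : Set ℝ)) θ → ∀ i j : Fin n, ∀ cj : ℝ,
        |cj| ≤ (H - L) / 2 →
        0 ≤ (H - L) / 2 * (A (Function.update θ i L) i - A (Function.update θ i H) i)
          + cj * (A (Function.update θ i L) j - A (Function.update θ i H) j) := by
    intro hm hnb θ hθ i j cj hcj
    have hθL := hdup hθ i hLmem
    have hθH := hdup hθ i hHmem
    have hmono := hm θ hθ i
    rcases eq_or_lt_of_le hmono with hd0 | hdpos
    · have h2 := hnb θ hθ i hd0.symm j
      unfold Delta at hd0 h2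
      rw [← hd0, h2]
      simp
    · unfold Delta at hdpos
      have b1 := hbin _ hθL i
      have b2 := hbin _ hθH i
      have b3 := hbin _ hθL j
      have b4 := hbin _ hθH j
      obtain ⟨hc1, hc2⟩ := abs_le.mp hcj
      rcases b1 with b1 | b1 <;> rcases b2 with b2 | b2 <;>
        rcases b3 with b3 | b3 <;> rcases b4 with b4 | b4 <;>
        simp only [b1, b2, b3, b4] <;>
        linarith [hdpos, b1, b2, b3, b4]
  have hBPmono : Bribeproof (fun _ => ({L, H} : Set ℝ)) A p →
      ∀ θ, InDomain (fun _ => ({L, H} : Set ℝ)) θ → ∀ i : Fin n,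
        0 ≤ Delta A L H θ i i := by
    intro hbp θ hθ i
    have hθL := hdup hθ i hLmem
    have hθH := hdup hθ i hHmem
    have h := hbp _ hθL i i H hHmem
    rw [Function.update_idem] at h
    rw [husum (Function.update θ i L) (Function.update θ i L) hθL i i,
        husum (Function.update θ i L) (Function.update θ i H) hθH i i] at h
    simp only [Function.update_self] at h
    unfold Delta
    nlinarith [h, sub_pos.mpr hLH]
  have hBPnb : Bribeproof (fun _ => ({L, H} : Set ℝ)) A p →
      ∀ θ, InDomain (fun _ => ({L, H} : Set ℝ)) θ → ∀ i : Fin n,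
        Delta A L H θ i i = 0 → ∀ j : Fin n, Delta A L H θ i j = 0 := by
    intro hbp θ hθ i hΔ j
    rcases eq_or_ne j i with rfl | hji
    · exact hΔ
    have hθL := hdup hθ i hLmem
    have hθH := hdup hθ i hHmem
    unfold Delta at hΔ ⊢
    have hEq : A (Function.update θ i L) i = A (Function.update θ i H) i :=
      sub_eq_zero.mp hΔ
    have hA := hbp _ hθL i j H hHmem
    rw [Function.update_idem] at hA
    rw [husum (Function.update θ i L) (Function.update θ i L) hθL i j,
        husum (Function.update θ i L) (Function.update θ i H) hθH i j] at hA
    have hB := hbp _ hθH i j L hLmem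
    rw [Function.update_idem] at hB
    rw [husum (Function.update θ i H) (Function.update θ i H) hθH i j,
        husum (Function.update θ i H) (Function.update θ i L) hθL i j] at hB
    simp only [Function.update_self, Function.update_of_ne hji, hEq] at hA hB
    rcases hmemLH hθ j with hj | hj <;> rw [hj] at hA hB
    · have h1 : ((L + H) / 2 - L) * A (Function.update θ i L) j =
          ((L + H) / 2 - L) * A (Function.update θ i H) j :=
        le_antisymm (by linarith) (by linarith)
      have hne : ((L + H) / 2 - L) ≠ 0 := by intro h; linarith
      have := mul_left_cancel₀ hne h1
      exact sub_eq_zero.mpr this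
    · have h1 : ((L + H) / 2 - H) * A (Function.update θ i L) j =
          ((L + H) / 2 - H) * A (Function.update θ i H) j :=
        le_antisymm (by linarith) (by linarith)
      have hne : ((L + H) / 2 - H) ≠ 0 := by intro h; linarith
      have := mul_left_cancel₀ hne h1
      exact sub_eq_zero.mpr this
  have hmnBP : (∀ θ, InDomain (fun _ => ({L, H} : Set ℝ)) θ → ∀ i : Fin n,
        0 ≤ Delta A L H θ i i) →
      (∀ θ, InDomain (fun _ => ({L, H} : Set ℝ)) θ → ∀ i : Fin n,
        Delta A L H θ i i = 0 → ∀ j : Fin n, Delta A L H θ i j = 0) →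
      Bribeproof (fun _ => ({L, H} : Set ℝ)) A p := by
    intro hm hnb θ hθ i j x hx
    have hx' : x = L ∨ x = H := by
      simpa [Set.mem_insert_iff] using hx
    have hx'' : x ∈ ({L, H} : Set ℝ) := by simpa [Set.mem_insert_iff] using hx'
    have hθ' := hdup hθ i hx''
    have hcjabs : |(L + H) / 2 - θ j| ≤ (H - L) / 2 := by
      rw [abs_le]
      rcases hmemLH hθ j with h | h <;> rw [h] <;> constructor <;> linarith
    rw [ge_iff_le, husum θ (Function.update θ i x) hθ' i j, husum θ θ hθ i j]
    rcases eq_or_ne x (θ i) with rfl | hxne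
    · rw [Function.update_eq_self]
    rcases hmemLH hθ i with hiL | hiH
    · have hxH : x = H := by
        rcases hx' with h | h
        · exact absurd (h.trans hiL.symm) hxne
        · exact h
      rw [hxH]
      have heq : Function.update θ i L = θ := by
        rw [← hiL]; exact Function.update_eq_self i θ
      rw [hiL, show A θ = A (Function.update θ i L) from by rw [heq]]
      have hcore := core hm hnb θ hθ i j ((L + H) / 2 - θ j) hcjabs
      linarith
    · have hxL : x = L := by
        rcases hx' with h | h
        · exact h
        · exact absurd (h.trans hiH.symm) hxne
      rw [hxL]
      have heq : Function.update θ i H = θ := by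
        rw [← hiH]; exact Function.update_eq_self i θ
      rw [hiH, show A θ = A (Function.update θ i H) from by rw [heq]]
      have hcore := core hm hnb θ hθ i j (-((L + H) / 2 - θ j)) (by rwa [abs_neg])
      linarith
  have hBPsbp : Bribeproof (fun _ => ({L, H} : Set ℝ)) A p →
      StronglyBribeproof (fun _ => ({L, H} : Set ℝ)) A p := by
    intro hbp
    refine ⟨hbp, ?_⟩
    intro θ hθ i j hij x hx y hy
    have hm := hBPmono hbp
    have hnb := hBPnb hbp
    have hji : j ≠ i := hij.symm
    have hx'' : x ∈ ({L, H} : Set ℝ) := by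
      have : x = L ∨ x = H := by simpa [Set.mem_insert_iff] using hx
      simpa [Set.mem_insert_iff] using this
    have hy' : y = L ∨ y = H := by simpa [Set.mem_insert_iff] using hy
    have hy'' : y ∈ ({L, H} : Set ℝ) := by simpa [Set.mem_insert_iff] using hy'
    have hθ' : InDomain (fun _ => ({L, H} : Set ℝ)) (Function.update θ i x) :=
      hdup hθ i hx''
    have hθhat : InDomain (fun _ => ({L, H} : Set ℝ))
        (Function.update (Function.update θ i x) j y) := hdup hθ' j hy''
    have step1 := hbp θ hθ i j x hx
    rw [husum θ θ hθ i j, husum θ (Function.update θ i x) hθ' i j] at step1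
    rw [ge_iff_le, husum θ (Function.update (Function.update θ i x) j y) hθhat i j,
        husum θ θ hθ i j]
    have hciabs : |(L + H) / 2 - θ i| ≤ (H - L) / 2 := by
      rw [abs_le]
      rcases hmemLH hθ i with h | h <;> rw [h] <;> constructor <;> linarith
    rcases eq_or_ne y (θ j) with rfl | hyne
    · have hupd : Function.update (Function.update θ i x) j (θ j) =
          Function.update θ i x := by
        rw [show θ j = Function.update θ i x j from (Function.update_of_ne hji x θ).symm,
            Function.update_eq_self]
      rw [hupd]
      linarith [step1]
    rcases hmemLH hθ j with hjL | hjH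
    · have hyH : y = H := by
        rcases hy' with h | h
        · exact absurd (h.trans hjL.symm) hyne
        · exact h
      rw [hyH]
      have heq2 : Function.update (Function.update θ i x) j L =
          Function.update θ i x := by
        have h : Function.update θ i x j = L := by
          rw [Function.update_of_ne hji, hjL]
        rw [← h, Function.update_eq_self]
      have hcore := core hm hnb (Function.update θ i x) hθ' j i
        ((L + H) / 2 - θ i) hciabs
      rw [heq2] at hcore
      rw [hjL]
      rw [hjL] at step1
      linarith [hcore, step1]
    · have hyL : y = L := by
        rcases hy' with h | h
        · exact h
        · exact absurd (h.trans hjH.symm) hyne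
      rw [hyL]
      have heq2 : Function.update (Function.update θ i x) j H =
          Function.update θ i x := by
        have h : Function.update θ i x j = H := by
          rw [Function.update_of_ne hji, hjH]
        rw [← h, Function.update_eq_self]
      have hcore := core hm hnb (Function.update θ i x) hθ' j i
        (-((L + H) / 2 - θ i)) (by rwa [abs_neg])
      rw [heq2] at hcore
      rw [hjH]
      rw [hjH] at step1
      linarith [hcore, step1]
  constructor
  · constructor
    · intro hbp
      exact ⟨hBPmono hbp, hBPnb hbp⟩
    · rintro ⟨hm, hnb⟩
      exact hmnBP hm hnb
  · constructor
    · exact hBPsbp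
    · exact fun h => h.1
end
end

section
/- Fix reals L < H. Let 𝒜 ⊆ {0,1}^n be a nonempty set of binary allocations, let α_1,…,α_n ≥ 0 be reals, β : 𝒜 → ℝ, and let ⪯ be a linear order on 𝒜; define sum(a,θ) := (Σ_i α_i·a_i·θ_i) + β(a). Suppose A : {L,H}^n → 𝒜 minimizes the weighted social cost breaking ties consistently, i.e., for every θ ∈ {L,H}^n: sum(A(θ),θ) ≤ sum(a,θ) for all a ∈ 𝒜, and whenever sum(A(θ),θ) = sum(a',θ) for some a' ∈ 𝒜 then A(θ) ⪯ a'. Then for every f ∈ ℝ^n, the (1/2)-linear mechanism (A,p) with p_i(θ) = ((L+H)/2)·A_i(θ) + f_i is strongly bribeproof. -/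
open Function Finset

noncomputable section

private lemma sum_diff_aux {n : ℕ} (α c θ : Fin n → ℝ) (i : Fin n) (x : ℝ) :
    (∑ k, α k * c k * θ k) - (∑ k, α k * c k * Function.update θ i x k)
      = α i * c i * (θ i - x) := by
  rw [← Finset.sum_sub_distrib, Finset.sum_eq_single i]
  · rw [Function.update_self]; ring
  · intro k _ hk
    rw [Function.update_of_ne hk]; ring
  · intro h; exact absurd (Finset.mem_univ i) h

theorem stmt_6 {n : ℕ} (hn : 2 ≤ n) (L H : ℝ) (hLH : L < H)
    (𝒜 : Set (Fin n → ℝ)) (h𝒜 : 𝒜.Nonempty)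
    (hbin : ∀ a ∈ 𝒜, ∀ i, a i = 0 ∨ a i = 1)
    (α : Fin n → ℝ) (hα : ∀ i, 0 ≤ α i) (β : (Fin n → ℝ) → ℝ)
    (r : (Fin n → ℝ) → (Fin n → ℝ) → Prop)
    (hrefl : ∀ a ∈ 𝒜, r a a)
    (hantisymm : ∀ a ∈ 𝒜, ∀ b ∈ 𝒜, r a b → r b a → a = b)
    (htrans : ∀ a ∈ 𝒜, ∀ b ∈ 𝒜, ∀ c ∈ 𝒜, r a b → r b c → r a c)
    (htotal : ∀ a ∈ 𝒜, ∀ b ∈ 𝒜, r a b ∨ r b a)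
    (A : (Fin n → ℝ) → Fin n → ℝ)
    (hAmem : ∀ θ, InDomain (fun _ => ({L, H} : Set ℝ)) θ → A θ ∈ 𝒜)
    (hAmin : ∀ θ, InDomain (fun _ => ({L, H} : Set ℝ)) θ → ∀ a ∈ 𝒜,
      (∑ i, α i * A θ i * θ i) + β (A θ) ≤ (∑ i, α i * a i * θ i) + β a)
    (hties : ∀ θ, InDomain (fun _ => ({L, H} : Set ℝ)) θ → ∀ a' ∈ 𝒜,
      (∑ i, α i * A θ i * θ i) + β (A θ) = (∑ i, α i * a' i * θ i) + β a' →
      r (A θ) a')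
    (f : Fin n → ℝ) :
    StronglyBribeproof (fun _ => ({L, H} : Set ℝ)) A
      (fun θ i => ((L + H) / 2) * A θ i + f i) := by
  have hdom : ∀ θ : Fin n → ℝ, InDomain (fun _ => ({L, H} : Set ℝ)) θ →
      ∀ (i : Fin n) (x : ℝ), x ∈ ({L, H} : Set ℝ) →
      InDomain (fun _ => ({L, H} : Set ℝ)) (Function.update θ i x) := by
    intro θ hθ i x hx k
    rcases eq_or_ne k i with rfl | h
    · rw [Function.update_self]; exact hx
    · rw [Function.update_of_ne h]; exact hθ k
  have hbound : ∀ t ∈ ({L, H} : Set ℝ), ∀ u v : ℝ,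
      (u = 0 ∨ u = 1) → (v = 0 ∨ v = 1) →
      -((H - L) / 2) ≤ ((L + H) / 2 - t) * (u - v) := by
    intro t ht u v hu hv
    simp only [Set.mem_insert_iff, Set.mem_singleton_iff] at ht
    rcases ht with rfl | rfl <;> rcases hu with rfl | rfl <;> rcases hv with rfl | rfl <;>
      nlinarith
  have key : ∀ θ, InDomain (fun _ => ({L, H} : Set ℝ)) θ → ∀ (i : Fin n),
      ∀ x ∈ ({L, H} : Set ℝ),
      A θ = A (Function.update θ i x) ∨
      ((L + H) / 2 - θ i) * (A θ i - A (Function.update θ i x) i) = (H - L) / 2 := by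
    intro θ hθ i x hx
    by_cases hax : A θ = A (Function.update θ i x)
    · exact Or.inl hax
    right
    have hθ' : InDomain (fun _ => ({L, H} : Set ℝ)) (Function.update θ i x) :=
      hdom θ hθ i x hx
    have ha := hAmem θ hθ
    have hb := hAmem _ hθ'
    have h1 := hAmin θ hθ (A (Function.update θ i x)) hb
    have h2 := hAmin _ hθ' (A θ) ha
    have da := sum_diff_aux α (A θ) θ i x
    have db := sum_diff_aux α (A (Function.update θ i x)) θ i x
    have hle : α i * (A θ i - A (Function.update θ i x) i) * (θ i - x) ≤ 0 := by
      linarith [h1, h2, da, db]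
    rcases hle.lt_or_eq with hstrict | heqz
    · have hprod : (A θ i - A (Function.update θ i x) i) * (θ i - x) < 0 := by
        by_contra h
        push_neg at h
        nlinarith [mul_nonneg (hα i) h]
      have hta := hbin (A θ) ha i
      have htb := hbin (A (Function.update θ i x)) hb i
      have hti := hθ i
      simp only [Set.mem_insert_iff, Set.mem_singleton_iff] at hti hx
      rcases hti with h3 | h3 <;> rcases hx with h4 | h4 <;>
        rcases hta with h5 | h5 <;> rcases htb with h6 | h6 <;>
        rw [h5, h6] at hprod ⊢ <;> rw [h3] at hprod ⊢ <;> rw [h4] at hprod <;>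
        first
          | ring1
          | (exfalso; nlinarith)
    · exfalso
      have e1 : (∑ k, α k * A θ k * θ k) + β (A θ)
          = (∑ k, α k * A (Function.update θ i x) k * θ k) + β (A (Function.update θ i x)) := by
        linarith [h1, h2, da, db, heqz]
      have e2 : (∑ k, α k * A (Function.update θ i x) k * Function.update θ i x k)
            + β (A (Function.update θ i x))
          = (∑ k, α k * A θ k * Function.update θ i x k) + β (A θ) := by
        linarith [h1, h2, da, db, heqz]
      exact hax (hantisymm _ ha _ hb (hties θ hθ _ hb e1) (hties _ hθ' _ ha e2))
  constructor
  · intro θ hθ i j x hx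
    have ha := hAmem θ hθ
    have hb := hAmem _ (hdom θ hθ i x hx)
    rcases key θ hθ i x hx with heq | hkey
    · simp only [utility, heq]
      exact le_refl _
    · have hbj := hbound (θ j) (hθ j) (A θ j) (A (Function.update θ i x) j)
        (hbin _ ha j) (hbin _ hb j)
      simp only [utility]
      linarith [hkey, hbj]
  · intro θ hθ i j hij x hx y hy
    have hθ' : InDomain (fun _ => ({L, H} : Set ℝ)) (Function.update θ i x) :=
      hdom θ hθ i x hx
    have hθ'' : InDomain (fun _ => ({L, H} : Set ℝ))
        (Function.update (Function.update θ i x) j y) := hdom _ hθ' j y hy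
    have ha := hAmem θ hθ
    have hb := hAmem _ hθ'
    have hc := hAmem _ hθ''
    have hupd : Function.update θ i x j = θ j := Function.update_of_ne hij.symm x θ
    have key2 := key (Function.update θ i x) hθ' j y hy
    rw [hupd] at key2
    have s1 : 0 ≤ ((L + H) / 2 - θ i) * (A θ i - A (Function.update θ i x) i)
        + ((L + H) / 2 - θ j) * (A θ j - A (Function.update θ i x) j) := by
      rcases key θ hθ i x hx with heq | hkey
      · rw [heq]; simp
      · have hbj := hbound (θ j) (hθ j) (A θ j) (A (Function.update θ i x) j)
          (hbin _ ha j) (hbin _ hb j)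
        linarith
    have s2 : 0 ≤ ((L + H) / 2 - θ i) * (A (Function.update θ i x) i
          - A (Function.update (Function.update θ i x) j y) i)
        + ((L + H) / 2 - θ j) * (A (Function.update θ i x) j
          - A (Function.update (Function.update θ i x) j y) j) := by
      rcases key2 with heq | hkey
      · rw [heq]; simp
      · have hbi := hbound (θ i) (hθ i) (A (Function.update θ i x) i)
          (A (Function.update (Function.update θ i x) j y) i) (hbin _ hb i) (hbin _ hc i)
        linarith
    simp only [utility]
    linarith [s1, s2]
end
end

section
/- Fix reals L < H and ε ≥ 0, and consider the path auction on the diamond network with the ε-perturbed domain Θ = Θ_1 × Θ_2 × Θ_3 × Θ_4 where Θ_1 = Θ_2 = {L−ε, H+ε} and Θ_3 = Θ_4 = {L, H}. If a mechanism (A,p) on Θ, whose algorithm A selects a minimum-cost path, is bribeproof, then there exist constants f_1, f_2, f_3, f_4 ∈ ℝ such that p_i(θ) = f_i + ((L+H)/2)·A_i(θ) for every agent i and every θ ∈ Θ; that is, (A,p) is a (1/2)-linear mechanism. -/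
open Function Finset

noncomputable section

lemma upd0 (a b c d v : ℝ) :
    Function.update (![a,b,c,d] : Fin 4 → ℝ) 0 v = ![v,b,c,d] := by
  funext k; fin_cases k <;> simp [Function.update]

lemma upd1 (a b c d v : ℝ) :
    Function.update (![a,b,c,d] : Fin 4 → ℝ) 1 v = ![a,v,c,d] := by
  funext k; fin_cases k <;> simp [Function.update]

lemma upd2 (a b c d v : ℝ) :
    Function.update (![a,b,c,d] : Fin 4 → ℝ) 2 v = ![a,b,v,d] := by
  funext k; fin_cases k <;> simp [Function.update]

lemma upd3 (a b c d v : ℝ) :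
    Function.update (![a,b,c,d] : Fin 4 → ℝ) 3 v = ![a,b,c,v] := by
  funext k; fin_cases k <;> simp [Function.update]

lemma br_expand {Θ : Fin 4 → Set ℝ} {A p : (Fin 4 → ℝ) → Fin 4 → ℝ}
    (hbp : Bribeproof Θ A p) {θ : Fin 4 → ℝ} (hθ : InDomain Θ θ) (i j : Fin 4) {x : ℝ}
    (hx : x ∈ Θ i) {θ' : Fin 4 → ℝ} (hup : Function.update θ i x = θ') :
    p θ i - A θ i * θ i + (p θ j - A θ j * θ j) ≥
      p θ' i - A θ' i * θ i + (p θ' j - A θ' j * θ j) := by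
  have h := hbp θ hθ i j x hx
  rw [hup] at h
  simpa [utility] using h

lemma noflip {Θ : Fin 4 → Set ℝ} {A p : (Fin 4 → ℝ) → Fin 4 → ℝ}
    (hbp : Bribeproof Θ A p) {θ θ' : Fin 4 → ℝ} (hθ : InDomain Θ θ) (hθ' : InDomain Θ θ')
    (m : Fin 4) {x : ℝ} (hx : x ∈ Θ m) (hup : Function.update θ m x = θ')
    {x' : ℝ} (hx' : x' ∈ Θ m) (hup' : Function.update θ' m x' = θ)
    (hA : A θ' = A θ) : p θ' = p θ := by
  funext j
  have b1 := br_expand hbp hθ m j hx hup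
  have b2 := br_expand hbp hθ' m j hx' hup'
  have b1m := br_expand hbp hθ m m hx hup
  have b2m := br_expand hbp hθ' m m hx' hup'
  rw [hA] at b1 b2 b1m b2m
  linarith

theorem stmt_7 (L H ε : ℝ) (hLH : L < H) (hε : 0 ≤ ε)
    (Θ : Fin 4 → Set ℝ)
    (hΘ : Θ = ![({L - ε, H + ε} : Set ℝ), {L - ε, H + ε}, {L, H}, {L, H}])
    (A p : (Fin 4 → ℝ) → Fin 4 → ℝ)
    (hfeas : ∀ θ, InDomain Θ θ →
      A θ = (![1, 1, 0, 0] : Fin 4 → ℝ) ∨ A θ = (![0, 0, 1, 1] : Fin 4 → ℝ))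
    (hupper : ∀ θ, InDomain Θ θ → θ 0 + θ 1 < θ 2 + θ 3 →
      A θ = (![1, 1, 0, 0] : Fin 4 → ℝ))
    (hlower : ∀ θ, InDomain Θ θ → θ 2 + θ 3 < θ 0 + θ 1 →
      A θ = (![0, 0, 1, 1] : Fin 4 → ℝ))
    (hbp : Bribeproof Θ A p) :
    ∃ f : Fin 4 → ℝ, ∀ θ, InDomain Θ θ → ∀ i,
      p θ i = f i + ((L + H) / 2) * A θ i := by

  obtain hε0 | hεpos := eq_or_lt_of_le hε
  · -- ε = 0
    subst hε0
    have hΘ' : Θ = ![({L, H} : Set ℝ), {L, H}, {L, H}, {L, H}] := by rw [hΘ]; norm_num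
    have hx0L : (L:ℝ) ∈ Θ 0 := by rw [hΘ']; simp
    have hx0H : (H:ℝ) ∈ Θ 0 := by rw [hΘ']; simp
    have hx1L : (L:ℝ) ∈ Θ 1 := by rw [hΘ']; simp
    have hx1H : (H:ℝ) ∈ Θ 1 := by rw [hΘ']; simp
    have hx2L : (L:ℝ) ∈ Θ 2 := by rw [hΘ']; simp
    have hx2H : (H:ℝ) ∈ Θ 2 := by rw [hΘ']; simp
    have hx3L : (L:ℝ) ∈ Θ 3 := by rw [hΘ']; simp
    have hx3H : (H:ℝ) ∈ Θ 3 := by rw [hΘ']; simp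
    have hdPI : InDomain Θ (![L, L, L, L] : Fin 4 → ℝ) := by intro k; fin_cases k <;> rw [hΘ'] <;> simp
    have hdPA : InDomain Θ (![L, L, L, H] : Fin 4 → ℝ) := by intro k; fin_cases k <;> rw [hΘ'] <;> simp
    have hdPK : InDomain Θ (![L, L, H, L] : Fin 4 → ℝ) := by intro k; fin_cases k <;> rw [hΘ'] <;> simp
    have hdPC : InDomain Θ (![L, L, H, H] : Fin 4 → ℝ) := by intro k; fin_cases k <;> rw [hΘ'] <;> simp
    have hdPB : InDomain Θ (![L, H, L, H] : Fin 4 → ℝ) := by intro k; fin_cases k <;> rw [hΘ'] <;> simp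
    have hdPD : InDomain Θ (![L, H, H, H] : Fin 4 → ℝ) := by intro k; fin_cases k <;> rw [hΘ'] <;> simp
    have hdPE : InDomain Θ (![H, L, L, H] : Fin 4 → ℝ) := by intro k; fin_cases k <;> rw [hΘ'] <;> simp
    have hdPG : InDomain Θ (![H, L, H, H] : Fin 4 → ℝ) := by intro k; fin_cases k <;> rw [hΘ'] <;> simp
    have hdPJ : InDomain Θ (![L, H, L, L] : Fin 4 → ℝ) := by intro k; fin_cases k <;> rw [hΘ'] <;> simp
    have hdPM : InDomain Θ (![H, L, L, L] : Fin 4 → ℝ) := by intro k; fin_cases k <;> rw [hΘ'] <;> simp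
    have hdPN : InDomain Θ (![H, H, L, L] : Fin 4 → ℝ) := by intro k; fin_cases k <;> rw [hΘ'] <;> simp
    have hdPF : InDomain Θ (![H, H, L, H] : Fin 4 → ℝ) := by intro k; fin_cases k <;> rw [hΘ'] <;> simp
    have hdPP : InDomain Θ (![H, H, H, L] : Fin 4 → ℝ) := by intro k; fin_cases k <;> rw [hΘ'] <;> simp
    have hdPHH : InDomain Θ (![H, H, H, H] : Fin 4 → ℝ) := by intro k; fin_cases k <;> rw [hΘ'] <;> simp
    have hdPLT : InDomain Θ (![L, H, H, L] : Fin 4 → ℝ) := by intro k; fin_cases k <;> rw [hΘ'] <;> simp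
    have hdPO : InDomain Θ (![H, L, H, L] : Fin 4 → ℝ) := by intro k; fin_cases k <;> rw [hΘ'] <;> simp
    have haPA : A ![L, L, L, H] = (![1, 1, 0, 0] : Fin 4 → ℝ) := hupper _ hdPA (by simp; linarith)
    have haPK : A ![L, L, H, L] = (![1, 1, 0, 0] : Fin 4 → ℝ) := hupper _ hdPK (by simp; linarith)
    have haPC : A ![L, L, H, H] = (![1, 1, 0, 0] : Fin 4 → ℝ) := hupper _ hdPC (by simp; linarith)
    have haPD : A ![L, H, H, H] = (![1, 1, 0, 0] : Fin 4 → ℝ) := hupper _ hdPD (by simp; linarith)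
    have haPG : A ![H, L, H, H] = (![1, 1, 0, 0] : Fin 4 → ℝ) := hupper _ hdPG (by simp; linarith)
    have haPJ : A ![L, H, L, L] = (![0, 0, 1, 1] : Fin 4 → ℝ) := hlower _ hdPJ (by simp; linarith)
    have haPM : A ![H, L, L, L] = (![0, 0, 1, 1] : Fin 4 → ℝ) := hlower _ hdPM (by simp; linarith)
    have haPN : A ![H, H, L, L] = (![0, 0, 1, 1] : Fin 4 → ℝ) := hlower _ hdPN (by simp; linarith)
    have haPF : A ![H, H, L, H] = (![0, 0, 1, 1] : Fin 4 → ℝ) := hlower _ hdPF (by simp; linarith)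
    have haPP : A ![H, H, H, L] = (![0, 0, 1, 1] : Fin 4 → ℝ) := hlower _ hdPP (by simp; linarith)
    have n1 : p ![L, L, H, H] = p ![L, L, L, H] := noflip hbp hdPA hdPC 2 hx2H (by rw [upd2]) hx2L (by rw [upd2]) (by rw [haPC, haPA])
    have n2 : p ![L, H, H, H] = p ![L, L, H, H] := noflip hbp hdPC hdPD 1 hx1H (by rw [upd1]) hx1L (by rw [upd1]) (by rw [haPD, haPC])
    have n3 : p ![H, L, H, H] = p ![L, L, H, H] := noflip hbp hdPC hdPG 0 hx0H (by rw [upd0]) hx0L (by rw [upd0]) (by rw [haPG, haPC])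
    have n4 : p ![L, L, H, H] = p ![L, L, H, L] := noflip hbp hdPK hdPC 3 hx3H (by rw [upd3]) hx3L (by rw [upd3]) (by rw [haPC, haPK])
    have n5 : p ![H, H, L, L] = p ![L, H, L, L] := noflip hbp hdPJ hdPN 0 hx0H (by rw [upd0]) hx0L (by rw [upd0]) (by rw [haPN, haPJ])
    have n6 : p ![H, H, L, L] = p ![H, L, L, L] := noflip hbp hdPM hdPN 1 hx1H (by rw [upd1]) hx1L (by rw [upd1]) (by rw [haPN, haPM])
    have n7 : p ![H, H, L, H] = p ![H, H, L, L] := noflip hbp hdPN hdPF 3 hx3H (by rw [upd3]) hx3L (by rw [upd3]) (by rw [haPF, haPN])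
    have n8 : p ![H, H, H, L] = p ![H, H, L, L] := noflip hbp hdPN hdPP 2 hx2H (by rw [upd2]) hx2L (by rw [upd2]) (by rw [haPP, haPN])
    have hkB : (p ![L, L, H, H] 0 - p ![H, H, L, L] 0) ≤ (p ![L, L, H, H] 1 - p ![H, H, L, L] 1) ∧ (p ![H, H, L, L] 2 - p ![L, L, H, H] 2) ≤ (p ![H, H, L, L] 3 - p ![L, L, H, H] 3) := by
      rcases hfeas ![L, H, L, H] hdPB with hB | hB
      · have nB : p ![L, H, L, H] = p ![L, L, L, H] := noflip hbp hdPA hdPB 1 hx1H (by rw [upd1]) hx1L (by rw [upd1]) (by rw [hB, haPA])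
        have b1 := br_expand hbp hdPJ 3 0 hx3H (by rw [upd3])
        have b2 := br_expand hbp hdPB 3 1 hx3L (by rw [upd3])
        have b3 := br_expand hbp hdPB 0 2 hx0H (by rw [upd0])
        simp only [nB, ← n1, ← n5, n7] at b1 b2 b3
        simp [haPJ, hB, haPF, haPA] at b1 b2 b3
        constructor <;> linarith [b1, b2, b3]
      · have nB : p ![L, H, L, H] = p ![L, H, L, L] := noflip hbp hdPJ hdPB 3 hx3H (by rw [upd3]) hx3L (by rw [upd3]) (by rw [hB, haPJ])
        have e1 := br_expand hbp hdPB 2 0 hx2H (by rw [upd2])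
        have e2 := br_expand hbp hdPA 1 2 hx1H (by rw [upd1])
        have e3 := br_expand hbp hdPB 1 3 hx1L (by rw [upd1])
        simp only [nB, ← n5, n2, ← n1] at e1 e2 e3
        simp [hB, haPD, haPA] at e1 e2 e3
        constructor <;> linarith [e1, e2, e3]
    have hkO : (p ![L, L, H, H] 1 - p ![H, H, L, L] 1) ≤ (p ![L, L, H, H] 0 - p ![H, H, L, L] 0) ∧ (p ![H, H, L, L] 3 - p ![L, L, H, H] 3) ≤ (p ![H, H, L, L] 2 - p ![L, L, H, H] 2) := by
      rcases hfeas ![H, L, H, L] hdPO with hO | hO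
      · have nO : p ![H, L, H, L] = p ![L, L, H, L] := noflip hbp hdPK hdPO 0 hx0H (by rw [upd0]) hx0L (by rw [upd0]) (by rw [hO, haPK])
        have f1 := br_expand hbp hdPM 2 1 hx2H (by rw [upd2])
        have f2 := br_expand hbp hdPO 2 0 hx2L (by rw [upd2])
        have f3 := br_expand hbp hdPO 1 3 hx1H (by rw [upd1])
        simp only [nO, ← n4, ← n6, n8] at f1 f2 f3
        simp [haPM, hO, haPP, haPK] at f1 f2 f3
        constructor <;> linarith [f1, f2, f3]
      · have nO : p ![H, L, H, L] = p ![H, L, L, L] := noflip hbp hdPM hdPO 2 hx2H (by rw [upd2]) hx2L (by rw [upd2]) (by rw [hO, haPM])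
        have g1 := br_expand hbp hdPO 3 1 hx3H (by rw [upd3])
        have g2 := br_expand hbp hdPK 0 3 hx0H (by rw [upd0])
        have g3 := br_expand hbp hdPO 0 2 hx0L (by rw [upd0])
        simp only [nO, ← n6, n3, ← n4] at g1 g2 g3
        simp [hO, haPG, haPK, haPM] at g1 g2 g3
        constructor <;> linarith [g1, g2, g3]
    have hkey : (p ![L, L, H, H] 0 - p ![H, H, L, L] 0) = (L+H)/2 ∧ (p ![L, L, H, H] 1 - p ![H, H, L, L] 1) = (L+H)/2 ∧ (p ![H, H, L, L] 2 - p ![L, L, H, H] 2) = (L+H)/2 ∧ (p ![H, H, L, L] 3 - p ![L, L, H, H] 3) = (L+H)/2 := by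
      rcases hfeas ![H, L, L, H] hdPE with hE | hE
      · have nE : p ![H, L, L, H] = p ![L, L, L, H] := noflip hbp hdPA hdPE 0 hx0H (by rw [upd0]) hx0L (by rw [upd0]) (by rw [hE, haPA])
        have m1 := br_expand hbp hdPF 1 3 hx1L (by rw [upd1])
        have m2 := br_expand hbp hdPE 3 0 hx3L (by rw [upd3])
        have m3 := br_expand hbp hdPE 1 0 hx1H (by rw [upd1])
        have m4 := br_expand hbp hdPE 3 2 hx3L (by rw [upd3])
        simp only [nE, ← n1, ← n6, n7] at m1 m2 m3 m4
        simp [haPF, hE, haPM, haPA] at m1 m2 m3 m4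
        refine ⟨?_, ?_, ?_, ?_⟩ <;> linarith [m1, m2, m3, m4, hkB.1, hkB.2, hkO.1, hkO.2]
      · have nE : p ![H, L, L, H] = p ![H, L, L, L] := noflip hbp hdPM hdPE 3 hx3H (by rw [upd3]) hx3L (by rw [upd3]) (by rw [hE, haPM])
        have q1 := br_expand hbp hdPA 0 2 hx0H (by rw [upd0])
        have q2 := br_expand hbp hdPE 2 1 hx2H (by rw [upd2])
        have q3 := br_expand hbp hdPE 0 1 hx0L (by rw [upd0])
        have q4 := br_expand hbp hdPE 2 3 hx2H (by rw [upd2])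
        simp only [nE, ← n6, ← n1, n3] at q1 q2 q3 q4
        simp [haPA, hE, haPG, haPM] at q1 q2 q3 q4
        refine ⟨?_, ?_, ?_, ?_⟩ <;> linarith [q1, q2, q3, q4, hkB.1, hkB.2, hkO.1, hkO.2]
    obtain ⟨c0, c1, c2, c3⟩ := hkey
    refine ⟨![p ![H, H, L, L] 0, p ![H, H, L, L] 1, p ![H, H, L, L] 2 - (L + H) / 2, p ![H, H, L, L] 3 - (L + H) / 2], ?_⟩
    intro θ hθd
    have hU : ∀ i : Fin 4, p ![L, L, H, H] i = (![p ![H, H, L, L] 0, p ![H, H, L, L] 1, p ![H, H, L, L] 2 - (L + H) / 2, p ![H, H, L, L] 3 - (L + H) / 2] : Fin 4 → ℝ) i + (L + H) / 2 * (![1, 1, 0, 0] : Fin 4 → ℝ) i := by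
      intro i; fin_cases i <;> simp <;> linarith
    have hLo : ∀ i : Fin 4, p ![H, H, L, L] i = (![p ![H, H, L, L] 0, p ![H, H, L, L] 1, p ![H, H, L, L] 2 - (L + H) / 2, p ![H, H, L, L] 3 - (L + H) / 2] : Fin 4 → ℝ) i + (L + H) / 2 * (![0, 0, 1, 1] : Fin 4 → ℝ) i := by
      intro i; fin_cases i <;> simp <;> linarith
    have h0 : θ 0 = L ∨ θ 0 = H := by have := hθd 0; rw [hΘ'] at this; simpa using this
    have h1 : θ 1 = L ∨ θ 1 = H := by have := hθd 1; rw [hΘ'] at this; simpa using this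
    have h2 : θ 2 = L ∨ θ 2 = H := by have := hθd 2; rw [hΘ'] at this; simpa using this
    have h3 : θ 3 = L ∨ θ 3 = H := by have := hθd 3; rw [hΘ'] at this; simpa using this
    rcases h0 with h0 | h0 <;> rcases h1 with h1 | h1 <;> rcases h2 with h2 | h2 <;> rcases h3 with h3 | h3
    · -- PI
      have hθeq : θ = (![L, L, L, L] : Fin 4 → ℝ) := by funext k; fin_cases k <;> simp [h0, h1, h2, h3]
      intro i
      rcases hfeas ![L, L, L, L] hdPI with hT | hT
      · have e : p ![L, L, H, L] = p ![L, L, L, L] := noflip hbp hdPI hdPK 2 hx2H (by rw [upd2]) hx2L (by rw [upd2]) (by rw [haPK, hT])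
        rw [hθeq, hT]
        simp only [← e, ← n4]
        exact hU i
      · have e : p ![L, H, L, L] = p ![L, L, L, L] := noflip hbp hdPI hdPJ 1 hx1H (by rw [upd1]) hx1L (by rw [upd1]) (by rw [haPJ, hT])
        rw [hθeq, hT]
        simp only [← e, ← n5]
        exact hLo i
    · -- PA
      have hθeq : θ = (![L, L, L, H] : Fin 4 → ℝ) := by funext k; fin_cases k <;> simp [h0, h1, h2, h3]
      intro i
      rw [hθeq, haPA]
      simp only [← n1]
      exact hU i
    · -- PK
      have hθeq : θ = (![L, L, H, L] : Fin 4 → ℝ) := by funext k; fin_cases k <;> simp [h0, h1, h2, h3]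
      intro i
      rw [hθeq, haPK]
      simp only [← n4]
      exact hU i
    · -- PC
      have hθeq : θ = (![L, L, H, H] : Fin 4 → ℝ) := by funext k; fin_cases k <;> simp [h0, h1, h2, h3]
      intro i
      rw [hθeq, haPC]
      exact hU i
    · -- PJ
      have hθeq : θ = (![L, H, L, L] : Fin 4 → ℝ) := by funext k; fin_cases k <;> simp [h0, h1, h2, h3]
      intro i
      rw [hθeq, haPJ]
      simp only [← n5]
      exact hLo i
    · -- PB
      have hθeq : θ = (![L, H, L, H] : Fin 4 → ℝ) := by funext k; fin_cases k <;> simp [h0, h1, h2, h3]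
      intro i
      rcases hfeas ![L, H, L, H] hdPB with hT | hT
      · have e : p ![L, H, L, H] = p ![L, L, L, H] := noflip hbp hdPA hdPB 1 hx1H (by rw [upd1]) hx1L (by rw [upd1]) (by rw [hT, haPA])
        rw [hθeq, hT]
        simp only [e, ← n1]
        exact hU i
      · have e : p ![L, H, L, H] = p ![L, H, L, L] := noflip hbp hdPJ hdPB 3 hx3H (by rw [upd3]) hx3L (by rw [upd3]) (by rw [hT, haPJ])
        rw [hθeq, hT]
        simp only [e, ← n5]
        exact hLo i
    · -- PLT
      have hθeq : θ = (![L, H, H, L] : Fin 4 → ℝ) := by funext k; fin_cases k <;> simp [h0, h1, h2, h3]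
      intro i
      rcases hfeas ![L, H, H, L] hdPLT with hT | hT
      · have e : p ![L, H, H, L] = p ![L, L, H, L] := noflip hbp hdPK hdPLT 1 hx1H (by rw [upd1]) hx1L (by rw [upd1]) (by rw [hT, haPK])
        rw [hθeq, hT]
        simp only [e, ← n4]
        exact hU i
      · have e : p ![H, H, H, L] = p ![L, H, H, L] := noflip hbp hdPLT hdPP 0 hx0H (by rw [upd0]) hx0L (by rw [upd0]) (by rw [haPP, hT])
        rw [hθeq, hT]
        simp only [← e, n8]
        exact hLo i
    · -- PD
      have hθeq : θ = (![L, H, H, H] : Fin 4 → ℝ) := by funext k; fin_cases k <;> simp [h0, h1, h2, h3]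
      intro i
      rw [hθeq, haPD]
      simp only [n2]
      exact hU i
    · -- PM
      have hθeq : θ = (![H, L, L, L] : Fin 4 → ℝ) := by funext k; fin_cases k <;> simp [h0, h1, h2, h3]
      intro i
      rw [hθeq, haPM]
      simp only [← n6]
      exact hLo i
    · -- PE
      have hθeq : θ = (![H, L, L, H] : Fin 4 → ℝ) := by funext k; fin_cases k <;> simp [h0, h1, h2, h3]
      intro i
      rcases hfeas ![H, L, L, H] hdPE with hT | hT
      · have e : p ![H, L, L, H] = p ![L, L, L, H] := noflip hbp hdPA hdPE 0 hx0H (by rw [upd0]) hx0L (by rw [upd0]) (by rw [hT, haPA])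
        rw [hθeq, hT]
        simp only [e, ← n1]
        exact hU i
      · have e : p ![H, L, L, H] = p ![H, L, L, L] := noflip hbp hdPM hdPE 3 hx3H (by rw [upd3]) hx3L (by rw [upd3]) (by rw [hT, haPM])
        rw [hθeq, hT]
        simp only [e, ← n6]
        exact hLo i
    · -- PO
      have hθeq : θ = (![H, L, H, L] : Fin 4 → ℝ) := by funext k; fin_cases k <;> simp [h0, h1, h2, h3]
      intro i
      rcases hfeas ![H, L, H, L] hdPO with hT | hT
      · have e : p ![H, L, H, L] = p ![L, L, H, L] := noflip hbp hdPK hdPO 0 hx0H (by rw [upd0]) hx0L (by rw [upd0]) (by rw [hT, haPK])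
        rw [hθeq, hT]
        simp only [e, ← n4]
        exact hU i
      · have e : p ![H, L, H, L] = p ![H, L, L, L] := noflip hbp hdPM hdPO 2 hx2H (by rw [upd2]) hx2L (by rw [upd2]) (by rw [hT, haPM])
        rw [hθeq, hT]
        simp only [e, ← n6]
        exact hLo i
    · -- PG
      have hθeq : θ = (![H, L, H, H] : Fin 4 → ℝ) := by funext k; fin_cases k <;> simp [h0, h1, h2, h3]
      intro i
      rw [hθeq, haPG]
      simp only [n3]
      exact hU i
    · -- PN
      have hθeq : θ = (![H, H, L, L] : Fin 4 → ℝ) := by funext k; fin_cases k <;> simp [h0, h1, h2, h3]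
      intro i
      rw [hθeq, haPN]
      exact hLo i
    · -- PF
      have hθeq : θ = (![H, H, L, H] : Fin 4 → ℝ) := by funext k; fin_cases k <;> simp [h0, h1, h2, h3]
      intro i
      rw [hθeq, haPF]
      simp only [n7]
      exact hLo i
    · -- PP
      have hθeq : θ = (![H, H, H, L] : Fin 4 → ℝ) := by funext k; fin_cases k <;> simp [h0, h1, h2, h3]
      intro i
      rw [hθeq, haPP]
      simp only [n8]
      exact hLo i
    · -- PHH
      have hθeq : θ = (![H, H, H, H] : Fin 4 → ℝ) := by funext k; fin_cases k <;> simp [h0, h1, h2, h3]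
      intro i
      rcases hfeas ![H, H, H, H] hdPHH with hT | hT
      · have e : p ![H, H, H, H] = p ![L, H, H, H] := noflip hbp hdPD hdPHH 0 hx0H (by rw [upd0]) hx0L (by rw [upd0]) (by rw [hT, haPD])
        rw [hθeq, hT]
        simp only [e, n2]
        exact hU i
      · have e : p ![H, H, H, H] = p ![H, H, L, H] := noflip hbp hdPF hdPHH 2 hx2H (by rw [upd2]) hx2L (by rw [upd2]) (by rw [hT, haPF])
        rw [hθeq, hT]
        simp only [e, n7]
        exact hLo i
  · -- ε > 0
    exfalso
    have hy0H : (H + ε : ℝ) ∈ Θ 0 := by rw [hΘ]; simp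
    have hy0L : (L - ε : ℝ) ∈ Θ 0 := by rw [hΘ]; simp
    have hy1H : (H + ε : ℝ) ∈ Θ 1 := by rw [hΘ]; simp
    have hy1L : (L - ε : ℝ) ∈ Θ 1 := by rw [hΘ]; simp
    have hx2L : (L:ℝ) ∈ Θ 2 := by rw [hΘ]; simp
    have hx2H : (H:ℝ) ∈ Θ 2 := by rw [hΘ]; simp
    have hx3L : (L:ℝ) ∈ Θ 3 := by rw [hΘ]; simp
    have hx3H : (H:ℝ) ∈ Θ 3 := by rw [hΘ]; simp
    have hdQA : InDomain Θ (![L - ε, L - ε, L, H] : Fin 4 → ℝ) := by intro k; fin_cases k <;> rw [hΘ] <;> simp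
    have hdQB : InDomain Θ (![L - ε, H + ε, L, H] : Fin 4 → ℝ) := by intro k; fin_cases k <;> rw [hΘ] <;> simp
    have hdQC : InDomain Θ (![L - ε, L - ε, H, H] : Fin 4 → ℝ) := by intro k; fin_cases k <;> rw [hΘ] <;> simp
    have hdQD : InDomain Θ (![L - ε, H + ε, H, H] : Fin 4 → ℝ) := by intro k; fin_cases k <;> rw [hΘ] <;> simp
    have hdQE : InDomain Θ (![H + ε, L - ε, L, H] : Fin 4 → ℝ) := by intro k; fin_cases k <;> rw [hΘ] <;> simp
    have hdQG : InDomain Θ (![H + ε, L - ε, H, H] : Fin 4 → ℝ) := by intro k; fin_cases k <;> rw [hΘ] <;> simp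
    have hdQJ : InDomain Θ (![L - ε, H + ε, L, L] : Fin 4 → ℝ) := by intro k; fin_cases k <;> rw [hΘ] <;> simp
    have hdQM : InDomain Θ (![H + ε, L - ε, L, L] : Fin 4 → ℝ) := by intro k; fin_cases k <;> rw [hΘ] <;> simp
    have hdQN : InDomain Θ (![H + ε, H + ε, L, L] : Fin 4 → ℝ) := by intro k; fin_cases k <;> rw [hΘ] <;> simp
    have haQA : A ![L - ε, L - ε, L, H] = (![1, 1, 0, 0] : Fin 4 → ℝ) := hupper _ hdQA (by simp; linarith)
    have haQC : A ![L - ε, L - ε, H, H] = (![1, 1, 0, 0] : Fin 4 → ℝ) := hupper _ hdQC (by simp; linarith)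
    have haQD : A ![L - ε, H + ε, H, H] = (![1, 1, 0, 0] : Fin 4 → ℝ) := hupper _ hdQD (by simp; linarith)
    have haQG : A ![H + ε, L - ε, H, H] = (![1, 1, 0, 0] : Fin 4 → ℝ) := hupper _ hdQG (by simp; linarith)
    have haQJ : A ![L - ε, H + ε, L, L] = (![0, 0, 1, 1] : Fin 4 → ℝ) := hlower _ hdQJ (by simp; linarith)
    have haQM : A ![H + ε, L - ε, L, L] = (![0, 0, 1, 1] : Fin 4 → ℝ) := hlower _ hdQM (by simp; linarith)
    have haQN : A ![H + ε, H + ε, L, L] = (![0, 0, 1, 1] : Fin 4 → ℝ) := hlower _ hdQN (by simp; linarith)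
    have n1 : p ![L - ε, L - ε, H, H] = p ![L - ε, L - ε, L, H] := noflip hbp hdQA hdQC 2 hx2H (by rw [upd2]) hx2L (by rw [upd2]) (by rw [haQC, haQA])
    have n2 : p ![L - ε, H + ε, H, H] = p ![L - ε, L - ε, H, H] := noflip hbp hdQC hdQD 1 hy1H (by rw [upd1]) hy1L (by rw [upd1]) (by rw [haQD, haQC])
    have n3 : p ![H + ε, L - ε, H, H] = p ![L - ε, L - ε, H, H] := noflip hbp hdQC hdQG 0 hy0H (by rw [upd0]) hy0L (by rw [upd0]) (by rw [haQG, haQC])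
    have n5 : p ![H + ε, H + ε, L, L] = p ![L - ε, H + ε, L, L] := noflip hbp hdQJ hdQN 0 hy0H (by rw [upd0]) hy0L (by rw [upd0]) (by rw [haQN, haQJ])
    have n6 : p ![H + ε, H + ε, L, L] = p ![H + ε, L - ε, L, L] := noflip hbp hdQM hdQN 1 hy1H (by rw [upd1]) hy1L (by rw [upd1]) (by rw [haQN, haQM])
    rcases hfeas ![L - ε, H + ε, L, H] hdQB with hB | hB <;> rcases hfeas ![H + ε, L - ε, L, H] hdQE with hE | hE
    · have nB : p ![L - ε, H + ε, L, H] = p ![L - ε, L - ε, L, H] := noflip hbp hdQA hdQB 1 hy1H (by rw [upd1]) hy1L (by rw [upd1]) (by rw [hB, haQA])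
      have nE : p ![H + ε, L - ε, L, H] = p ![L - ε, L - ε, L, H] := noflip hbp hdQA hdQE 0 hy0H (by rw [upd0]) hy0L (by rw [upd0]) (by rw [hE, haQA])
      have b1 := br_expand hbp hdQJ 3 0 hx3H (by rw [upd3])
      have b2 := br_expand hbp hdQB 3 1 hx3L (by rw [upd3])
      have c1 := br_expand hbp hdQM 3 1 hx3H (by rw [upd3])
      have c2 := br_expand hbp hdQE 3 0 hx3L (by rw [upd3])
      simp only [nB, nE, ← n5, ← n6] at b1 b2 c1 c2
      simp [haQJ, hB, haQM, hE, haQA] at b1 b2 c1 c2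
      linarith [b1, b2, c1, c2, hεpos]
    · have nB : p ![L - ε, H + ε, L, H] = p ![L - ε, L - ε, L, H] := noflip hbp hdQA hdQB 1 hy1H (by rw [upd1]) hy1L (by rw [upd1]) (by rw [hB, haQA])
      have nE : p ![H + ε, L - ε, L, H] = p ![H + ε, L - ε, L, L] := noflip hbp hdQM hdQE 3 hx3H (by rw [upd3]) hx3L (by rw [upd3]) (by rw [hE, haQM])
      have b1 := br_expand hbp hdQJ 3 0 hx3H (by rw [upd3])
      have b2 := br_expand hbp hdQB 3 1 hx3L (by rw [upd3])
      have d1 := br_expand hbp hdQE 2 1 hx2H (by rw [upd2])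
      have d2 := br_expand hbp hdQG 2 0 hx2L (by rw [upd2])
      simp only [nB, nE, ← n1, n3, ← n5, ← n6] at b1 b2 d1 d2
      simp [haQJ, hB, hE, haQG, haQA] at b1 b2 d1 d2
      linarith [b1, b2, d1, d2, hεpos]
    · have nB : p ![L - ε, H + ε, L, H] = p ![L - ε, H + ε, L, L] := noflip hbp hdQJ hdQB 3 hx3H (by rw [upd3]) hx3L (by rw [upd3]) (by rw [hB, haQJ])
      have nE : p ![H + ε, L - ε, L, H] = p ![L - ε, L - ε, L, H] := noflip hbp hdQA hdQE 0 hy0H (by rw [upd0]) hy0L (by rw [upd0]) (by rw [hE, haQA])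
      have e1 := br_expand hbp hdQB 2 0 hx2H (by rw [upd2])
      have e2 := br_expand hbp hdQD 2 1 hx2L (by rw [upd2])
      have c1 := br_expand hbp hdQM 3 1 hx3H (by rw [upd3])
      have c2 := br_expand hbp hdQE 3 0 hx3L (by rw [upd3])
      simp only [nB, nE, n2, ← n1, ← n5, ← n6] at e1 e2 c1 c2
      simp [hB, haQD, haQM, hE, haQA] at e1 e2 c1 c2
      linarith [e1, e2, c1, c2, hεpos]
    · have nB : p ![L - ε, H + ε, L, H] = p ![L - ε, H + ε, L, L] := noflip hbp hdQJ hdQB 3 hx3H (by rw [upd3]) hx3L (by rw [upd3]) (by rw [hB, haQJ])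
      have nE : p ![H + ε, L - ε, L, H] = p ![H + ε, L - ε, L, L] := noflip hbp hdQM hdQE 3 hx3H (by rw [upd3]) hx3L (by rw [upd3]) (by rw [hE, haQM])
      have e1 := br_expand hbp hdQB 2 0 hx2H (by rw [upd2])
      have e2 := br_expand hbp hdQD 2 1 hx2L (by rw [upd2])
      have d1 := br_expand hbp hdQE 2 1 hx2H (by rw [upd2])
      have d2 := br_expand hbp hdQG 2 0 hx2L (by rw [upd2])
      simp only [nB, nE, n2, n3, ← n5, ← n6] at e1 e2 d1 d2
      simp [hB, haQD, hE, haQG] at e1 e2 d1 d2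
      linarith [e1, e2, d1, d2, hεpos]
end
end

section
/- Fix reals L < M < H, n ≥ 2 agents, and an integer k with 1 ≤ k ≤ n. Define the mechanism (A,p) on the three-values domain {L,M,H}^n by: A_i(θ) = 1 if the number of agents j with θ_j < θ_i, or with θ_j = θ_i and j < i, is less than k, and A_i(θ) = 0 otherwise (i.e., A selects the k agents with smallest reported types, breaking ties in favor of smaller index); and p_i(θ) = M·A_i(θ). Then (A,p) is bribeproof. -/
open Function Finset

noncomputable section

open scoped Classical

namespace BPAux

variable {n : ℕ}

def cond (w : Fin n → ℝ) (m i : Fin n) : Prop := w m < w i ∨ (w m = w i ∧ m < i)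

def cnt (w : Fin n → ℝ) (i : Fin n) : ℕ :=
  (Finset.univ.filter (fun m => cond w m i)).card

lemma cond_irrefl (w : Fin n → ℝ) (i : Fin n) : ¬ cond w i i := by
  rintro (h | ⟨_, h⟩) <;> exact absurd h (lt_irrefl _)

lemma cond_trans {w : Fin n → ℝ} {a b c : Fin n} (h1 : cond w a b) (h2 : cond w b c) :
    cond w a c := by
  rcases h1 with h1 | ⟨h1, h1'⟩ <;> rcases h2 with h2 | ⟨h2, h2'⟩
  · exact Or.inl (h1.trans h2)
  · exact Or.inl (h2 ▸ h1)
  · exact Or.inl (h1 ▸ h2)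
  · exact Or.inr ⟨h1.trans h2, h1'.trans h2'⟩

lemma cond_total {w : Fin n → ℝ} {i j : Fin n} (h : ¬ cond w i j) (hij : i ≠ j) :
    cond w j i := by
  rcases lt_trichotomy (w j) (w i) with hv | hv | hv
  · exact Or.inl hv
  · refine Or.inr ⟨hv, ?_⟩
    rcases lt_trichotomy j i with hl | hl | hl
    · exact hl
    · exact absurd hl hij.symm
    · exact absurd (Or.inr ⟨hv.symm, hl⟩) h
  · exact absurd (Or.inl hv) h

lemma rank {w : Fin n → ℝ} {i j : Fin n} (h : cond w i j) : cnt w i + 1 ≤ cnt w j := by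
  have hii : i ∉ Finset.univ.filter (fun m => cond w m i) := by
    simp [cond_irrefl]
  have hsub : insert i (Finset.univ.filter (fun m => cond w m i)) ⊆
      Finset.univ.filter (fun m => cond w m j) := by
    intro m hm
    rcases Finset.mem_insert.1 hm with rfl | hm
    · simp only [Finset.mem_filter, Finset.mem_univ, true_and]; exact h
    · simp only [Finset.mem_filter, Finset.mem_univ, true_and] at hm ⊢
      exact cond_trans hm h
  have := Finset.card_le_card hsub
  rwa [Finset.card_insert_of_notMem hii] at this

lemma cnt_self_mono (θ : Fin n → ℝ) (i : Fin n) (x₁ x₂ : ℝ) (h : x₁ ≤ x₂) :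
    cnt (Function.update θ i x₁) i ≤ cnt (Function.update θ i x₂) i := by
  apply Finset.card_le_card
  intro m hm
  simp only [Finset.mem_filter, Finset.mem_univ, true_and] at hm ⊢
  have hmi : m ≠ i := by rintro rfl; exact cond_irrefl _ _ hm
  rw [cond] at hm ⊢
  rw [Function.update_of_ne hmi, Function.update_self] at hm ⊢
  rcases hm with hm | ⟨hm, hm'⟩
  · exact Or.inl (hm.trans_le h)
  · rcases h.lt_or_eq with h' | h'
    · exact Or.inl (hm ▸ h')
    · exact Or.inr ⟨hm.trans h', hm'⟩

lemma cnt_other_anti (θ : Fin n → ℝ) (i j : Fin n) (hji : j ≠ i) (x₁ x₂ : ℝ) (h : x₁ ≤ x₂) :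
    cnt (Function.update θ i x₂) j ≤ cnt (Function.update θ i x₁) j := by
  apply Finset.card_le_card
  intro m hm
  simp only [Finset.mem_filter, Finset.mem_univ, true_and] at hm ⊢
  rw [cond] at hm ⊢
  rw [Function.update_of_ne hji] at hm ⊢
  by_cases hmi : m = i
  · subst hmi
    rw [Function.update_self] at hm ⊢
    rcases hm with hm | ⟨hm, hm'⟩
    · exact Or.inl (h.trans_lt hm)
    · rcases h.lt_or_eq with h' | h'
      · exact Or.inl (hm ▸ h')
      · exact Or.inr ⟨h'.trans hm, hm'⟩
  · rwa [Function.update_of_ne hmi] at hm ⊢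

lemma cnt_other_le (θ : Fin n → ℝ) (i j : Fin n) (hji : j ≠ i) (x₁ x₂ : ℝ) :
    cnt (Function.update θ i x₁) j ≤ cnt (Function.update θ i x₂) j + 1 := by
  have hsub : Finset.univ.filter (fun m => cond (Function.update θ i x₁) m j) ⊆
      insert i (Finset.univ.filter (fun m => cond (Function.update θ i x₂) m j)) := by
    intro m hm
    by_cases hmi : m = i
    · exact Finset.mem_insert.2 (Or.inl hmi)
    · refine Finset.mem_insert.2 (Or.inr ?_)
      simp only [Finset.mem_filter, Finset.mem_univ, true_and] at hm ⊢
      rw [cond] at hm ⊢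
      rwa [Function.update_of_ne hji, Function.update_of_ne hmi] at hm ⊢
  calc cnt (Function.update θ i x₁) j ≤ _ := Finset.card_le_card hsub
    _ ≤ _ := Finset.card_insert_le _ _

lemma cnt_le_of_imp (θ : Fin n → ℝ) (i j : Fin n) (hji : j ≠ i) (x₁ x₂ : ℝ)
    (h : cond (Function.update θ i x₁) i j → cond (Function.update θ i x₂) i j) :
    cnt (Function.update θ i x₁) j ≤ cnt (Function.update θ i x₂) j := by
  apply Finset.card_le_card
  intro m hm
  simp only [Finset.mem_filter, Finset.mem_univ, true_and] at hm ⊢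
  by_cases hmi : m = i
  · subst hmi; exact h hm
  · rw [cond] at hm ⊢
    rwa [Function.update_of_ne hji, Function.update_of_ne hmi] at hm ⊢

lemma key (k : ℕ) (θ : Fin n → ℝ) (i j : Fin n) (hij : i ≠ j) (x₁ x₂ : ℝ) (h12 : x₁ ≤ x₂)
    (hv : cnt (Function.update θ i x₂) j < k)
    (hu : k ≤ cnt (Function.update θ i x₁) j) :
    cnt (Function.update θ i x₁) i < k ∧ k ≤ cnt (Function.update θ i x₂) i ∧
      x₁ ≤ θ j ∧ θ j ≤ x₂ := by
  have hji : j ≠ i := hij.symm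
  have hiu : cond (Function.update θ i x₁) i j := by
    by_contra hc
    have := cnt_le_of_imp θ i j hji x₁ x₂ (fun h => absurd h hc)
    omega
  have hiv : ¬ cond (Function.update θ i x₂) i j := by
    intro hc
    have := cnt_le_of_imp θ i j hji x₁ x₂ (fun _ => hc)
    omega
  have hle : cnt (Function.update θ i x₁) j ≤ cnt (Function.update θ i x₂) j + 1 :=
    cnt_other_le θ i j hji x₁ x₂
  constructor
  · have := rank hiu; omega
  refine ⟨?_, ?_, ?_⟩
  · have := rank (cond_total hiv hij)
    have hle' : cnt (Function.update θ i x₂) j ≤ cnt (Function.update θ i x₂) j := le_refl _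
    omega
  · rw [cond, Function.update_self, Function.update_of_ne hji] at hiu
    rcases hiu with h | ⟨h, _⟩
    · exact h.le
    · exact h.le
  · rw [cond, Function.update_self, Function.update_of_ne hji] at hiv
    push_neg at hiv
    exact hiv.1

end BPAux

open scoped Classical in
theorem stmt_10 {n : ℕ} (hn : 2 ≤ n) (L M H : ℝ) (hLM : L < M) (hMH : M < H)
    (k : ℕ) (hk1 : 1 ≤ k) (hkn : k ≤ n)
    (A p : (Fin n → ℝ) → Fin n → ℝ)
    (hA : ∀ θ (i : Fin n), A θ i =
      if (Finset.univ.filter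
            (fun j : Fin n => θ j < θ i ∨ (θ j = θ i ∧ j < i))).card < k
      then 1 else 0)
    (hp : ∀ θ i, p θ i = M * A θ i) :
    Bribeproof (fun _ => ({L, M, H} : Set ℝ)) A p := by
  intro θ hθ i j x hx
  have hdom : ∀ m : Fin n, θ m = L ∨ θ m = M ∨ θ m = H := by
    intro m; have := hθ m; simpa [Set.mem_insert_iff] using this
  have hxd : x = L ∨ x = M ∨ x = H := by simpa [Set.mem_insert_iff] using hx
  have hLle : ∀ y : ℝ, (y = L ∨ y = M ∨ y = H) → L ≤ y ∧ y ≤ H := by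
    rintro y (rfl | rfl | rfl) <;> constructor <;> linarith
  have hA' : ∀ (v : Fin n → ℝ) (m : Fin n),
      A v m = if BPAux.cnt v m < k then 1 else 0 := by
    intro v m
    rw [hA]
    congr 1
    simp only [BPAux.cnt, BPAux.cond]
    congr!
    exact congrArg (fun I => @Finset.filter _ _ I) (Subsingleton.elim _ _)
  have hA1 : ∀ (v : Fin n → ℝ) (m : Fin n), BPAux.cnt v m < k → A v m = 1 := by
    intro v m h; rw [hA']; exact if_pos h
  have hA0 : ∀ (v : Fin n → ℝ) (m : Fin n), ¬ BPAux.cnt v m < k → A v m = 0 := by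
    intro v m h; rw [hA']; exact if_neg h
  have hA01 : ∀ (v : Fin n → ℝ) (m : Fin n), A v m = 0 ∨ A v m = 1 := by
    intro v m; rw [hA']; split_ifs <;> simp
  have hA1' : ∀ (v : Fin n → ℝ) (m : Fin n), A v m = 1 → BPAux.cnt v m < k := by
    intro v m h; by_contra hc; rw [hA0 _ _ hc] at h; norm_num at h
  have hA0' : ∀ (v : Fin n → ℝ) (m : Fin n), A v m = 0 → ¬ BPAux.cnt v m < k := by
    intro v m h hc; rw [hA1 _ _ hc] at h; norm_num at h
  have hAmono : ∀ (v w : Fin n → ℝ) (m : Fin n),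
      BPAux.cnt v m ≤ BPAux.cnt w m → A w m ≤ A v m := by
    intro v w m h
    by_cases h2 : BPAux.cnt w m < k
    · rw [hA1 _ _ h2, hA1 _ _ (lt_of_le_of_lt h h2)]
    · rw [hA0 _ _ h2]
      rcases hA01 v m with h' | h' <;> rw [h'] <;> norm_num
  have hut : ∀ (v : Fin n → ℝ) (m : Fin n) (t : ℝ),
      utility A p v m t = A v m * (M - t) := by
    intro v m t; rw [utility, hp]; ring
  simp only [hut]
  have hself : Function.update θ i (θ i) = θ := Function.update_eq_self i θ
  have selfmono : ∀ x₁ x₂ : ℝ, x₁ ≤ x₂ →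
      A (Function.update θ i x₂) i ≤ A (Function.update θ i x₁) i :=
    fun x₁ x₂ h => hAmono _ _ _ (BPAux.cnt_self_mono θ i x₁ x₂ h)
  by_cases hij : i = j
  · subst hij
    suffices h : A (Function.update θ i x) i * (M - θ i) ≤ A θ i * (M - θ i) by linarith
    rcases le_total (θ i) x with hle | hle
    · have hsm := selfmono (θ i) x hle
      rw [hself] at hsm
      rcases hdom i with h | h | h
      · apply mul_le_mul_of_nonneg_right hsm; rw [h]; linarith
      · rw [h, sub_self, mul_zero, mul_zero]
      · have hxe : x = θ i := le_antisymm ((hLle x hxd).2.trans_eq h.symm) hle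
        rw [hxe, hself]
    · have hsm := selfmono x (θ i) hle
      rw [hself] at hsm
      rcases hdom i with h | h | h
      · have hxe : x = θ i := le_antisymm hle (h ▸ (hLle x hxd).1)
        rw [hxe, hself]
      · rw [h, sub_self, mul_zero, mul_zero]
      · apply mul_le_mul_of_nonpos_right hsm; rw [h]; linarith
  · have hji : j ≠ i := fun h => hij h.symm
    rcases le_total (θ i) x with hle | hle
    · -- overreport
      have hsm := selfmono (θ i) x hle
      rw [hself] at hsm
      have hoa := BPAux.cnt_other_anti θ i j hji (θ i) x hle
      rw [hself] at hoa
      have hom : A θ j ≤ A (Function.update θ i x) j := hAmono _ _ _ hoa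
      by_cases hbj : A θ j = A (Function.update θ i x) j
      · rw [← hbj]
        rcases eq_or_lt_of_le hle with heq | hlt
        · rw [← heq, hself]
        · have hMt : 0 ≤ M - θ i := by
            rcases hdom i with h | h | h
            · rw [h]; linarith
            · rw [h]; linarith
            · exfalso; rw [h] at hlt; linarith [(hLle x hxd).2]
          have := mul_le_mul_of_nonneg_right hsm hMt
          linarith
      · have haj : A θ j = 0 ∧ A (Function.update θ i x) j = 1 := by
          rcases hA01 θ j with h1 | h1 <;>
            rcases hA01 (Function.update θ i x) j with h2 | h2
          · exact absurd (h1.trans h2.symm) hbj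
          · exact ⟨h1, h2⟩
          · rw [h1, h2] at hom; norm_num at hom
          · exact absurd (h1.trans h2.symm) hbj
        have hcv : BPAux.cnt (Function.update θ i x) j < k := hA1' _ _ haj.2
        have hcu : k ≤ BPAux.cnt (Function.update θ i (θ i)) j := by
          rw [hself]; exact le_of_not_gt (hA0' _ _ haj.1)
        have hkey := BPAux.key k θ i j hij (θ i) x hle hcv hcu
        rw [hself] at hkey
        obtain ⟨hk1', hk2', hk3', hk4'⟩ := hkey
        rw [hA1 _ _ hk1', hA0 _ _ (not_lt.2 hk2'), haj.1, haj.2]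
        linarith
    · -- underreport
      have hsm := selfmono x (θ i) hle
      rw [hself] at hsm
      have hoa := BPAux.cnt_other_anti θ i j hji x (θ i) hle
      rw [hself] at hoa
      have hom : A (Function.update θ i x) j ≤ A θ j := hAmono _ _ _ hoa
      by_cases hbj : A θ j = A (Function.update θ i x) j
      · rw [← hbj]
        rcases eq_or_lt_of_le hle with heq | hlt
        · rw [heq, hself]
        · have hMt : M - θ i ≤ 0 := by
            rcases hdom i with h | h | h
            · exfalso; rw [h] at hlt; linarith [(hLle x hxd).1]
            · rw [h]; linarith
            · rw [h]; linarith
          have := mul_le_mul_of_nonpos_right hsm hMt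
          linarith
      · have haj : A θ j = 1 ∧ A (Function.update θ i x) j = 0 := by
          rcases hA01 θ j with h1 | h1 <;>
            rcases hA01 (Function.update θ i x) j with h2 | h2
          · exact absurd (h1.trans h2.symm) hbj
          · rw [h1, h2] at hom; norm_num at hom
          · exact ⟨h1, h2⟩
          · exact absurd (h1.trans h2.symm) hbj
        have hcv : BPAux.cnt (Function.update θ i (θ i)) j < k := by
          rw [hself]; exact hA1' _ _ haj.1
        have hcu : k ≤ BPAux.cnt (Function.update θ i x) j :=
          le_of_not_gt (hA0' _ _ haj.2)
        have hkey := BPAux.key k θ i j hij x (θ i) hle hcv hcu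
        rw [hself] at hkey
        obtain ⟨hk1', hk2', hk3', hk4'⟩ := hkey
        rw [hA0 _ _ (not_lt.2 hk2'), hA1 _ _ hk1', haj.1, haj.2]
        linarith
end
end

section
/- Fix reals 0 < L < H and n ≥ 2 agents. There exist an algorithm A : {L,H}^n → ℝ^n and constants f_1,…,f_n ∈ ℝ such that: (i) for every θ ∈ {L,H}^n, A(θ) lies in the simplex {a ∈ ℝ^n : a_i ≥ 0 for all i and Σ_i a_i = 1} and satisfies min-max fairness, i.e., max_i A_i(θ)·θ_i ≤ max_i a_i·θ_i for every a in the simplex; and (ii) the (1/2)-linear mechanism (A,p) with p_i(θ) = ((L+H)/2)·A_i(θ) + f_i is strongly bribeproof. -/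
open Function Finset

noncomputable section

section Aux
set_option maxHeartbeats 1000000

lemma pair_key (L H R ti tj ri rj : ℝ) (h0L : 0 < L) (hLH : L < H) (hR : 0 ≤ R)
    (hti : ti = L ∨ ti = H) (htj : tj = L ∨ tj = H)
    (hri : ri = L ∨ ri = H) (hrj : rj = L ∨ rj = H) :
    ((L+H)/2 - ti) * ri⁻¹ / (ri⁻¹ + rj⁻¹ + R) + ((L+H)/2 - tj) * rj⁻¹ / (ri⁻¹ + rj⁻¹ + R)
      ≤ ((L+H)/2 - ti) * ti⁻¹ / (ti⁻¹ + tj⁻¹ + R) + ((L+H)/2 - tj) * tj⁻¹ / (ti⁻¹ + tj⁻¹ + R) := by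
  rcases hti with rfl | rfl <;> rcases htj with rfl | rfl <;>
    rcases hri with rfl | rfl <;> rcases hrj with rfl | rfl <;>
  first
  | exact le_rfl
  | · have h0H := h0L.trans hLH
      have hd := sub_pos.2 hLH
      rw [← add_div, ← add_div, div_le_div_iff₀ (by positivity) (by positivity)]
      field_simp
      nlinarith [mul_pos h0L h0H, mul_nonneg hd.le hd.le, mul_nonneg hR hd.le,
        mul_nonneg (mul_nonneg hR hR) hd.le,
        mul_nonneg (mul_nonneg hR h0L.le) h0H.le,
        mul_nonneg (mul_nonneg hd.le hd.le) hR,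
        mul_nonneg (mul_nonneg (mul_nonneg hd.le hd.le) hR) (mul_nonneg h0L.le h0H.le),
        mul_nonneg (mul_nonneg (mul_nonneg hd.le hd.le) (mul_nonneg hR hR)) (mul_nonneg h0L.le h0H.le),
        mul_nonneg (mul_nonneg (mul_nonneg hd.le hd.le) hR) (mul_nonneg h0L.le h0L.le),
        mul_nonneg (mul_nonneg (mul_nonneg hd.le hd.le) hR) (mul_nonneg h0H.le h0H.le),
        mul_pos (mul_pos h0L h0H) h0L, mul_pos (mul_pos h0L h0H) h0H,
        mul_nonneg (mul_nonneg hd.le hd.le) (mul_nonneg h0L.le h0H.le),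
        mul_nonneg (mul_nonneg (mul_nonneg hd.le h0L.le) h0L.le) h0H.le,
        mul_nonneg (mul_nonneg (mul_nonneg hd.le h0H.le) h0L.le) h0H.le,
        mul_nonneg (mul_nonneg hR (mul_nonneg h0L.le h0L.le)) (mul_nonneg h0H.le h0H.le)]

lemma single_key (L H R t r : ℝ) (h0L : 0 < L) (hLH : L < H) (hR : 0 ≤ R)
    (ht : t = L ∨ t = H) (hr : r = L ∨ r = H) :
    ((L+H)/2 - t) * r⁻¹ / (r⁻¹ + R) ≤ ((L+H)/2 - t) * t⁻¹ / (t⁻¹ + R) := by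
  rcases ht with rfl | rfl <;> rcases hr with rfl | rfl <;>
  first
  | exact le_rfl
  | · have h0H := h0L.trans hLH
      have hd := sub_pos.2 hLH
      rw [div_le_div_iff₀ (by positivity) (by positivity)]
      field_simp
      nlinarith [mul_pos h0L h0H, mul_nonneg hd.le hd.le, mul_nonneg hR hd.le,
        mul_nonneg (mul_nonneg (mul_nonneg hd.le hd.le) hR) (mul_nonneg h0L.le h0H.le),
        mul_nonneg (mul_nonneg hd.le hd.le) (mul_nonneg h0L.le h0H.le)]

lemma sum_split2 {n : ℕ} {i j : Fin n} (hij : i ≠ j) (g : Fin n → ℝ) :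
    ∑ k, g k = g i + g j + ∑ k ∈ Finset.univ \ {i, j}, g k := by
  rw [← Finset.sum_sdiff (Finset.subset_univ ({i, j} : Finset (Fin n))),
    Finset.sum_pair hij]
  ring

lemma sum_split1 {n : ℕ} (i : Fin n) (g : Fin n → ℝ) :
    ∑ k, g k = g i + ∑ k ∈ Finset.univ \ {i}, g k := by
  rw [← Finset.sum_sdiff (Finset.subset_univ ({i} : Finset (Fin n))),
    Finset.sum_singleton]
  ring

end Aux

theorem stmt_14 {n : ℕ} (hn : 2 ≤ n) (L H : ℝ) (h0L : 0 < L) (hLH : L < H) :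
    ∃ (A : (Fin n → ℝ) → Fin n → ℝ) (f : Fin n → ℝ),
      (∀ θ, InDomain (fun _ => ({L, H} : Set ℝ)) θ →
        (∀ i, 0 ≤ A θ i) ∧ (∑ i, A θ i) = 1 ∧
        ∀ a : Fin n → ℝ, (∀ i, 0 ≤ a i) → (∑ i, a i) = 1 →
          (⨆ i, A θ i * θ i) ≤ ⨆ i, a i * θ i) ∧
      StronglyBribeproof (fun _ => ({L, H} : Set ℝ)) A
        (fun θ i => ((L + H) / 2) * A θ i + f i) := by
  haveI : Nonempty (Fin n) := Fin.pos_iff_nonempty.mp (by omega)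
  have h0H : 0 < H := h0L.trans hLH
  -- the allocation
  refine ⟨fun θ k => (θ k)⁻¹ / ∑ m, (θ m)⁻¹, fun _ => 0, ?_, ?_⟩
  · -- fairness
    intro θ hθ
    have hmem : ∀ k, θ k = L ∨ θ k = H := fun k => by simpa using hθ k
    have hpos : ∀ k, 0 < θ k := fun k => by rcases hmem k with h | h <;> rw [h] <;> assumption
    have hSpos : 0 < ∑ m, (θ m)⁻¹ :=
      Finset.sum_pos (fun m _ => inv_pos.2 (hpos m)) Finset.univ_nonempty
    refine ⟨fun i => div_nonneg (inv_nonneg.2 (hpos i).le) hSpos.le, ?_, ?_⟩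
    · rw [← Finset.sum_div, div_self hSpos.ne']
    · intro a ha hsum
      have hval : ∀ i, (θ i)⁻¹ / (∑ m, (θ m)⁻¹) * θ i = (∑ m, (θ m)⁻¹)⁻¹ := by
        intro i
        rw [div_mul_eq_mul_div, inv_mul_cancel₀ (hpos i).ne', one_div]
      have hsup : (⨆ i, (θ i)⁻¹ / (∑ m, (θ m)⁻¹) * θ i) = (∑ m, (θ m)⁻¹)⁻¹ := by
        simp only [hval, ciSup_const]
      rw [hsup]
      -- there is an i with a i * θ i ≥ 1/S
      by_contra hcon
      push_neg at hcon
      have hlt : ∀ i, a i * θ i < (∑ m, (θ m)⁻¹)⁻¹ := by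
        intro i
        refine lt_of_le_of_lt ?_ hcon
        exact le_ciSup (f := fun i => a i * θ i) (Set.Finite.bddAbove (Set.finite_range _)) i
      have hai : ∀ i, a i < (θ i)⁻¹ / (∑ m, (θ m)⁻¹) := by
        intro i
        have h1 : a i < (∑ m, (θ m)⁻¹)⁻¹ / θ i := (lt_div_iff₀ (hpos i)).2 (hlt i)
        have h2 : (∑ m, (θ m)⁻¹)⁻¹ / θ i = (θ i)⁻¹ / (∑ m, (θ m)⁻¹) := by
          rw [div_eq_div_iff (hpos i).ne' hSpos.ne', inv_mul_cancel₀ hSpos.ne', inv_mul_cancel₀ (hpos i).ne']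
        exact h2 ▸ h1
      have : (1:ℝ) < 1 := by
        calc (1:ℝ) = ∑ i, a i := hsum.symm
          _ < ∑ i, (θ i)⁻¹ / (∑ m, (θ m)⁻¹) :=
              Finset.sum_lt_sum_of_nonempty Finset.univ_nonempty (fun i _ => hai i)
          _ = 1 := by rw [← Finset.sum_div, div_self hSpos.ne']
      exact absurd this (lt_irrefl 1)
  · have util : ∀ (v : Fin n → ℝ) (k : Fin n) (t : ℝ),
        utility (fun θ k => (θ k)⁻¹ / ∑ m, (θ m)⁻¹)
          (fun θ i => (L + H) / 2 * ((θ i)⁻¹ / ∑ m, (θ m)⁻¹) + (fun _ : Fin n => (0:ℝ)) i)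
          v k t = ((L + H) / 2 - t) * (v k)⁻¹ / ∑ m, (v m)⁻¹ := by
      intro v k t
      simp only [utility]
      ring
    constructor
    · -- Bribeproof
      intro θ hθ i j x hx
      have hmem : ∀ k, θ k = L ∨ θ k = H := fun k => by simpa using hθ k
      have hxm : x = L ∨ x = H := by simpa using hx
      have hpos : ∀ k, 0 < θ k := fun k => by rcases hmem k with h | h <;> rw [h] <;> assumption
      rcases eq_or_ne i j with rfl | hij
      · -- i = j : strategyproofness
        set R := ∑ k ∈ Finset.univ \ {i}, (θ k)⁻¹ with hRdef
        have hRnn : 0 ≤ R := Finset.sum_nonneg fun k _ => inv_nonneg.2 (hpos k).le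
        have hSθ : ∑ m, (θ m)⁻¹ = (θ i)⁻¹ + R := sum_split1 i _
        have hSu : ∑ m, ((Function.update θ i x) m)⁻¹ = x⁻¹ + R := by
          rw [sum_split1 i]
          congr 1
          · rw [Function.update_self]
          · exact Finset.sum_congr rfl fun k hk => by
              rw [Function.update_of_ne (by simpa using (Finset.mem_sdiff.1 hk).2)]
        have key := single_key L H R (θ i) x h0L hLH hRnn (hmem i) hxm
        simp only [util]
        rw [hSθ, hSu, Function.update_self]
        linarith
      · -- i ≠ j
        set R := ∑ k ∈ Finset.univ \ {i, j}, (θ k)⁻¹ with hRdef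
        have hRnn : 0 ≤ R := Finset.sum_nonneg fun k _ => inv_nonneg.2 (hpos k).le
        have hSθ : ∑ m, (θ m)⁻¹ = (θ i)⁻¹ + (θ j)⁻¹ + R := sum_split2 hij _
        have hSu : ∑ m, ((Function.update θ i x) m)⁻¹ = x⁻¹ + (θ j)⁻¹ + R := by
          rw [sum_split2 hij]
          congr 1
          · rw [Function.update_self, Function.update_of_ne hij.symm]
          · exact Finset.sum_congr rfl fun k hk => by
              have hk' := (Finset.mem_sdiff.1 hk).2
              simp only [Finset.mem_insert, Finset.mem_singleton, not_or] at hk'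
              rw [Function.update_of_ne hk'.1]
        have key := pair_key L H R (θ i) (θ j) x (θ j) h0L hLH hRnn
          (hmem i) (hmem j) hxm (hmem j)
        simp only [util]
        rw [hSθ, hSu, Function.update_self, Function.update_of_ne hij.symm]
        linarith
    · -- joint deviations
      intro θ hθ i j hij x hx y hy
      have hmem : ∀ k, θ k = L ∨ θ k = H := fun k => by simpa using hθ k
      have hxm : x = L ∨ x = H := by simpa using hx
      have hym : y = L ∨ y = H := by simpa using hy
      have hpos : ∀ k, 0 < θ k := fun k => by rcases hmem k with h | h <;> rw [h] <;> assumption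
      set R := ∑ k ∈ Finset.univ \ {i, j}, (θ k)⁻¹ with hRdef
      have hRnn : 0 ≤ R := Finset.sum_nonneg fun k _ => inv_nonneg.2 (hpos k).le
      have hSθ : ∑ m, (θ m)⁻¹ = (θ i)⁻¹ + (θ j)⁻¹ + R := sum_split2 hij _
      have hi' : Function.update (Function.update θ i x) j y i = x := by
        rw [Function.update_of_ne hij, Function.update_self]
      have hj' : Function.update (Function.update θ i x) j y j = y := by simp
      have hSu : ∑ m, ((Function.update (Function.update θ i x) j y) m)⁻¹ = x⁻¹ + y⁻¹ + R := by
        rw [sum_split2 hij]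
        congr 1
        · rw [hi', hj']
        · exact Finset.sum_congr rfl fun k hk => by
            have hk' := (Finset.mem_sdiff.1 hk).2
            simp only [Finset.mem_insert, Finset.mem_singleton, not_or] at hk'
            rw [Function.update_of_ne hk'.2, Function.update_of_ne hk'.1]
      have key := pair_key L H R (θ i) (θ j) x y h0L hLH hRnn
        (hmem i) (hmem j) hxm hym
      simp only [util]
      rw [hSθ, hSu, hi', hj']
      linarith
end
end

section
/- Let 0 < ε < 2/3, L = 1, and H = 2 + ε. Consider scheduling on related machines with n = 3 agents and jobs of sizes 10, 6, 6, with feasible allocation set 𝒜. For every λ ∈ [0,1], every f ∈ ℝ³, and every algorithm A : {L,H}³ → 𝒜 that minimizes the makespan (i.e., for all θ ∈ {L,H}³ and all a ∈ 𝒜: max_i A_i(θ)·θ_i ≤ max_i a_i·θ_i), the λ-linear mechanism (A,p) with p_i(θ) = (λL + (1−λ)H)·A_i(θ) + f_i is not bribeproof. -/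
open Function Finset

noncomputable section

/-- Feasible allocations for scheduling jobs of sizes 10, 6, 6 on three related machines. -/
def Sched : Set (Fin 3 → ℝ) :=
  {a | ∃ g : Fin 3 → Fin 3, ∀ i,
    a i = ∑ j ∈ Finset.univ.filter (fun j => g j = i), (![10, 6, 6] : Fin 3 → ℝ) j}

/-- Makespan of allocation `a` at types `θ`. -/
def makespan (a θ : Fin 3 → ℝ) : ℝ :=
  max (a 0 * θ 0) (max (a 1 * θ 1) (a 2 * θ 2))


section Aux

lemma fin3_cases' (x : Fin 3) : x = 0 ∨ x = 1 ∨ x = 2 := by fin_cases x <;> simp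

lemma sched_sum_eq' (g : Fin 3 → Fin 3) (i : Fin 3) :
    ∑ j ∈ Finset.univ.filter (fun j => g j = i), (![10,6,6] : Fin 3 → ℝ) j
    = (if g 0 = i then 10 else 0) + (if g 1 = i then 6 else 0) + (if g 2 = i then 6 else 0) := by
  rw [Finset.sum_filter, Fin.sum_univ_three]; norm_num; rfl

lemma sched_vals' {a : Fin 3 → ℝ} (h : a ∈ Sched) :
    (a 0 = 0 ∨ a 0 = 6 ∨ a 0 = 10 ∨ a 0 = 12 ∨ a 0 = 16 ∨ a 0 = 22) ∧
    (a 1 = 0 ∨ a 1 = 6 ∨ a 1 = 10 ∨ a 1 = 12 ∨ a 1 = 16 ∨ a 1 = 22) ∧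
    (a 2 = 0 ∨ a 2 = 6 ∨ a 2 = 10 ∨ a 2 = 12 ∨ a 2 = 16 ∨ a 2 = 22) ∧
    a 0 + a 1 + a 2 = 22 := by
  obtain ⟨g, hg⟩ := h
  have e0 := hg 0; have e1 := hg 1; have e2 := hg 2
  rw [sched_sum_eq'] at e0 e1 e2
  rcases fin3_cases' (g 0) with h0|h0|h0 <;> rcases fin3_cases' (g 1) with h1|h1|h1 <;>
    rcases fin3_cases' (g 2) with h2|h2|h2 <;>
    simp only [h0, h1, h2] at e0 e1 e2 <;> simp at e0 e1 e2 <;>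
    refine ⟨?_, ?_, ?_, ?_⟩ <;> norm_num [e0, e1, e2]

lemma mem1066' : (![10,6,6] : Fin 3 → ℝ) ∈ Sched :=
  ⟨![0,1,2], by intro i; rw [sched_sum_eq']; fin_cases i <;> simp <;> norm_num⟩
lemma mem6106' : (![6,10,6] : Fin 3 → ℝ) ∈ Sched :=
  ⟨![1,0,2], by intro i; rw [sched_sum_eq']; fin_cases i <;> simp <;> norm_num⟩
lemma mem6610' : (![6,6,10] : Fin 3 → ℝ) ∈ Sched :=
  ⟨![2,0,1], by intro i; rw [sched_sum_eq']; fin_cases i <;> simp <;> norm_num⟩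
lemma mem12010' : (![12,0,10] : Fin 3 → ℝ) ∈ Sched :=
  ⟨![2,0,0], by intro i; rw [sched_sum_eq']; fin_cases i <;> simp <;> norm_num⟩
lemma mem12100' : (![12,10,0] : Fin 3 → ℝ) ∈ Sched :=
  ⟨![1,0,0], by intro i; rw [sched_sum_eq']; fin_cases i <;> simp <;> norm_num⟩

lemma le_mk0 (a θ : Fin 3 → ℝ) : a 0 * θ 0 ≤ makespan a θ := le_max_left _ _
lemma le_mk1 (a θ : Fin 3 → ℝ) : a 1 * θ 1 ≤ makespan a θ :=
  le_trans (le_max_left _ _) (le_max_right _ _)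
lemma le_mk2 (a θ : Fin 3 → ℝ) : a 2 * θ 2 ≤ makespan a θ :=
  le_trans (le_max_right _ _) (le_max_right _ _)

lemma mk_le {a θ : Fin 3 → ℝ} {m : ℝ} (h0 : a 0 * θ 0 ≤ m) (h1 : a 1 * θ 1 ≤ m)
    (h2 : a 2 * θ 2 ≤ m) : makespan a θ ≤ m := max_le h0 (max_le h1 h2)

lemma pin_LHH {ε x y z : ℝ} (hε0 : 0 < ε) (hε1 : ε < 2 / 3)
    (vx : x = 0 ∨ x = 6 ∨ x = 10 ∨ x = 12 ∨ x = 16 ∨ x = 22)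
    (vy : y = 0 ∨ y = 6 ∨ y = 10 ∨ y = 12 ∨ y = 16 ∨ y = 22)
    (vz : z = 0 ∨ z = 6 ∨ z = 10 ∨ z = 12 ∨ z = 16 ∨ z = 22)
    (hsum : x + y + z = 22)
    (bx : x ≤ 12 + 6 * ε) (by1 : y * (2 + ε) ≤ 12 + 6 * ε) (bz : z * (2 + ε) ≤ 12 + 6 * ε) :
    x = 10 ∧ y = 6 ∧ z = 6 := by
  have hy : y = 0 ∨ y = 6 := by
    rcases vy with h|h|h|h|h|h <;> subst h <;> first | (exfalso; linarith) | norm_num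
  have hz : z = 0 ∨ z = 6 := by
    rcases vz with h|h|h|h|h|h <;> subst h <;> first | (exfalso; linarith) | norm_num
  have hx : x = 0 ∨ x = 6 ∨ x = 10 ∨ x = 12 := by
    rcases vx with h|h|h|h|h|h <;> subst h <;> first | (exfalso; linarith) | norm_num
  rcases hx with h|h|h|h <;> rcases hy with h'|h' <;> rcases hz with h''|h'' <;>
    first
      | (exact ⟨by linarith, by linarith, by linarith⟩)
      | (exfalso; linarith)

lemma pin_LHL {ε x y z : ℝ} (hε0 : 0 < ε)
    (vx : x = 0 ∨ x = 6 ∨ x = 10 ∨ x = 12 ∨ x = 16 ∨ x = 22)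
    (vy : y = 0 ∨ y = 6 ∨ y = 10 ∨ y = 12 ∨ y = 16 ∨ y = 22)
    (vz : z = 0 ∨ z = 6 ∨ z = 10 ∨ z = 12 ∨ z = 16 ∨ z = 22)
    (hsum : x + y + z = 22)
    (bx : x ≤ 12) (by1 : y * (2 + ε) ≤ 12) (bz : z ≤ 12) :
    (x = 12 ∧ y = 0 ∧ z = 10) ∨ (x = 10 ∧ y = 0 ∧ z = 12) := by
  have hy : y = 0 := by
    rcases vy with h|h|h|h|h|h <;> subst h <;> first | (exfalso; linarith) | norm_num
  have hx : x = 0 ∨ x = 6 ∨ x = 10 ∨ x = 12 := by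
    rcases vx with h|h|h|h|h|h <;> subst h <;> first | (exfalso; linarith) | norm_num
  have hz : z = 0 ∨ z = 6 ∨ z = 10 ∨ z = 12 := by
    rcases vz with h|h|h|h|h|h <;> subst h <;> first | (exfalso; linarith) | norm_num
  rcases hx with h|h|h|h <;> rcases hz with h''|h''|h''|h'' <;>
    first
      | (left; exact ⟨by linarith, by linarith, by linarith⟩)
      | (right; exact ⟨by linarith, by linarith, by linarith⟩)
      | (exfalso; linarith)

end Aux

theorem stmt_15 (ε : ℝ) (hε0 : 0 < ε) (hε1 : ε < 2 / 3)
    (lam : ℝ) (hl0 : 0 ≤ lam) (hl1 : lam ≤ 1) (f : Fin 3 → ℝ)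
    (A : (Fin 3 → ℝ) → Fin 3 → ℝ)
    (hfeas : ∀ θ, InDomain (fun _ => ({1, 2 + ε} : Set ℝ)) θ → A θ ∈ Sched)
    (hopt : ∀ θ, InDomain (fun _ => ({1, 2 + ε} : Set ℝ)) θ → ∀ a ∈ Sched,
      makespan (A θ) θ ≤ makespan a θ) :
    ¬ Bribeproof (fun _ => ({1, 2 + ε} : Set ℝ)) A
      (fun θ i => (lam * 1 + (1 - lam) * (2 + ε)) * A θ i + f i) := by
  intro hB
  -- domains
  have domA : InDomain (fun _ => ({1, 2 + ε} : Set ℝ)) ![1, 2+ε, 2+ε] := by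
    intro k; fin_cases k <;> simp
  have domB : InDomain (fun _ => ({1, 2 + ε} : Set ℝ)) ![2+ε, 1, 2+ε] := by
    intro k; fin_cases k <;> simp
  have domC : InDomain (fun _ => ({1, 2 + ε} : Set ℝ)) ![2+ε, 2+ε, 1] := by
    intro k; fin_cases k <;> simp
  have domD : InDomain (fun _ => ({1, 2 + ε} : Set ℝ)) ![1, 2+ε, 1] := by
    intro k; fin_cases k <;> simp
  have domE : InDomain (fun _ => ({1, 2 + ε} : Set ℝ)) ![1, 1, 2+ε] := by
    intro k; fin_cases k <;> simp
  -- fact at θa = (L,H,H): A θa = (10,6,6)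
  have FA : A ![1, 2+ε, 2+ε] 0 = 10 ∧ A ![1, 2+ε, 2+ε] 1 = 6 ∧ A ![1, 2+ε, 2+ε] 2 = 6 := by
    obtain ⟨v0, v1, v2, hsum⟩ := sched_vals' (hfeas _ domA)
    have hub : makespan (A ![1, 2+ε, 2+ε]) ![1, 2+ε, 2+ε] ≤ 12 + 6 * ε := by
      refine le_trans (hopt _ domA _ mem1066') (mk_le ?_ ?_ ?_) <;> simp <;> nlinarith
    have b0 : A ![1, 2+ε, 2+ε] 0 ≤ 12 + 6 * ε := by
      have := (le_mk0 (A ![1, 2+ε, 2+ε]) ![1, 2+ε, 2+ε]).trans hub; simpa using this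
    have b1 : A ![1, 2+ε, 2+ε] 1 * (2 + ε) ≤ 12 + 6 * ε := by
      have := (le_mk1 (A ![1, 2+ε, 2+ε]) ![1, 2+ε, 2+ε]).trans hub; simpa using this
    have b2 : A ![1, 2+ε, 2+ε] 2 * (2 + ε) ≤ 12 + 6 * ε := by
      have := (le_mk2 (A ![1, 2+ε, 2+ε]) ![1, 2+ε, 2+ε]).trans hub; simpa using this
    exact pin_LHH hε0 hε1 v0 v1 v2 hsum b0 b1 b2
  -- fact at θb = (H,L,H): A θb = (6,10,6)
  have FB : A ![2+ε, 1, 2+ε] 1 = 10 ∧ A ![2+ε, 1, 2+ε] 0 = 6 ∧ A ![2+ε, 1, 2+ε] 2 = 6 := by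
    obtain ⟨v0, v1, v2, hsum⟩ := sched_vals' (hfeas _ domB)
    have hub : makespan (A ![2+ε, 1, 2+ε]) ![2+ε, 1, 2+ε] ≤ 12 + 6 * ε := by
      refine le_trans (hopt _ domB _ mem6106') (mk_le ?_ ?_ ?_) <;> simp <;> nlinarith
    have b0 : A ![2+ε, 1, 2+ε] 0 * (2 + ε) ≤ 12 + 6 * ε := by
      have := (le_mk0 (A ![2+ε, 1, 2+ε]) ![2+ε, 1, 2+ε]).trans hub; simpa using this
    have b1 : A ![2+ε, 1, 2+ε] 1 ≤ 12 + 6 * ε := by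
      have := (le_mk1 (A ![2+ε, 1, 2+ε]) ![2+ε, 1, 2+ε]).trans hub; simpa using this
    have b2 : A ![2+ε, 1, 2+ε] 2 * (2 + ε) ≤ 12 + 6 * ε := by
      have := (le_mk2 (A ![2+ε, 1, 2+ε]) ![2+ε, 1, 2+ε]).trans hub; simpa using this
    exact pin_LHH hε0 hε1 v1 v0 v2 (by linarith) b1 b0 b2
  -- fact at θc = (H,H,L): A θc = (6,6,10)
  have FC : A ![2+ε, 2+ε, 1] 2 = 10 ∧ A ![2+ε, 2+ε, 1] 0 = 6 ∧ A ![2+ε, 2+ε, 1] 1 = 6 := by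
    obtain ⟨v0, v1, v2, hsum⟩ := sched_vals' (hfeas _ domC)
    have hub : makespan (A ![2+ε, 2+ε, 1]) ![2+ε, 2+ε, 1] ≤ 12 + 6 * ε := by
      refine le_trans (hopt _ domC _ mem6610') (mk_le ?_ ?_ ?_) <;> simp <;> nlinarith
    have b0 : A ![2+ε, 2+ε, 1] 0 * (2 + ε) ≤ 12 + 6 * ε := by
      have := (le_mk0 (A ![2+ε, 2+ε, 1]) ![2+ε, 2+ε, 1]).trans hub; simpa using this
    have b1 : A ![2+ε, 2+ε, 1] 1 * (2 + ε) ≤ 12 + 6 * ε := by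
      have := (le_mk1 (A ![2+ε, 2+ε, 1]) ![2+ε, 2+ε, 1]).trans hub; simpa using this
    have b2 : A ![2+ε, 2+ε, 1] 2 ≤ 12 + 6 * ε := by
      have := (le_mk2 (A ![2+ε, 2+ε, 1]) ![2+ε, 2+ε, 1]).trans hub; simpa using this
    exact pin_LHH hε0 hε1 v2 v0 v1 (by linarith) b2 b0 b1
  -- fact at θd = (L,H,L)
  have FD : (A ![1, 2+ε, 1] 0 = 12 ∧ A ![1, 2+ε, 1] 1 = 0 ∧ A ![1, 2+ε, 1] 2 = 10) ∨
      (A ![1, 2+ε, 1] 0 = 10 ∧ A ![1, 2+ε, 1] 1 = 0 ∧ A ![1, 2+ε, 1] 2 = 12) := by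
    obtain ⟨v0, v1, v2, hsum⟩ := sched_vals' (hfeas _ domD)
    have hub : makespan (A ![1, 2+ε, 1]) ![1, 2+ε, 1] ≤ 12 := by
      refine le_trans (hopt _ domD _ mem12010') (mk_le ?_ ?_ ?_) <;> simp <;> nlinarith
    have b0 : A ![1, 2+ε, 1] 0 ≤ 12 := by
      have := (le_mk0 (A ![1, 2+ε, 1]) ![1, 2+ε, 1]).trans hub; simpa using this
    have b1 : A ![1, 2+ε, 1] 1 * (2 + ε) ≤ 12 := by
      have := (le_mk1 (A ![1, 2+ε, 1]) ![1, 2+ε, 1]).trans hub; simpa using this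
    have b2 : A ![1, 2+ε, 1] 2 ≤ 12 := by
      have := (le_mk2 (A ![1, 2+ε, 1]) ![1, 2+ε, 1]).trans hub; simpa using this
    exact pin_LHL hε0 v0 v1 v2 hsum b0 b1 b2
  -- fact at θe = (L,L,H)
  have FE : (A ![1, 1, 2+ε] 0 = 12 ∧ A ![1, 1, 2+ε] 2 = 0 ∧ A ![1, 1, 2+ε] 1 = 10) ∨
      (A ![1, 1, 2+ε] 0 = 10 ∧ A ![1, 1, 2+ε] 2 = 0 ∧ A ![1, 1, 2+ε] 1 = 12) := by
    obtain ⟨v0, v1, v2, hsum⟩ := sched_vals' (hfeas _ domE)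
    have hub : makespan (A ![1, 1, 2+ε]) ![1, 1, 2+ε] ≤ 12 := by
      refine le_trans (hopt _ domE _ mem12100') (mk_le ?_ ?_ ?_) <;> simp <;> nlinarith
    have b0 : A ![1, 1, 2+ε] 0 ≤ 12 := by
      have := (le_mk0 (A ![1, 1, 2+ε]) ![1, 1, 2+ε]).trans hub; simpa using this
    have b1 : A ![1, 1, 2+ε] 1 ≤ 12 := by
      have := (le_mk1 (A ![1, 1, 2+ε]) ![1, 1, 2+ε]).trans hub; simpa using this
    have b2 : A ![1, 1, 2+ε] 2 * (2 + ε) ≤ 12 := by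
      have := (le_mk2 (A ![1, 1, 2+ε]) ![1, 1, 2+ε]).trans hub; simpa using this
    exact pin_LHL hε0 v0 v2 v1 (by linarith) b0 b2 b1
  obtain ⟨a0, a1, a2⟩ := FA
  obtain ⟨b1', b0', b2'⟩ := FB
  obtain ⟨c2', c0', c1'⟩ := FC
  rcases lt_or_eq_of_le hl0 with hpos | hlam0
  · -- λ > 0: use θd
    rcases FD with ⟨d0, d1, d2⟩ | ⟨d0, d1, d2⟩
    · -- A θd = (12,0,10): bribe at θa, i = 2 misreports L, j = 1
      have hupd : Function.update (![1, 2+ε, 2+ε] : Fin 3 → ℝ) 2 1 = ![1, 2+ε, 1] := by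
        funext k; fin_cases k <;> simp [Function.update]
      have key := hB ![1, 2+ε, 2+ε] domA 2 1 1 (by simp)
      rw [hupd] at key
      simp only [utility] at key
      simp only [a1, a2, d1, d2] at key
      simp at key
      nlinarith [mul_pos hpos hε0, key]
    · -- A θd = (10,0,12): bribe at θc, i = 0 misreports L, j = 1
      have hupd : Function.update (![2+ε, 2+ε, 1] : Fin 3 → ℝ) 0 1 = ![1, 2+ε, 1] := by
        funext k; fin_cases k <;> simp [Function.update]
      have key := hB ![2+ε, 2+ε, 1] domC 0 1 1 (by simp)
      rw [hupd] at key
      simp only [utility] at key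
      simp only [c0', c1', d0, d1] at key
      simp at key
      nlinarith [mul_pos hpos hε0, key]
  · -- λ = 0: use θe
    rcases FE with ⟨e0, e2, e1⟩ | ⟨e0, e2, e1⟩
    · -- A θe = (12,10,0): bribe at θa, i = 1 misreports L, j = 0
      have hupd : Function.update (![1, 2+ε, 2+ε] : Fin 3 → ℝ) 1 1 = ![1, 1, 2+ε] := by
        funext k; fin_cases k <;> simp [Function.update]
      have key := hB ![1, 2+ε, 2+ε] domA 1 0 1 (by simp)
      rw [hupd] at key
      simp only [utility] at key
      simp only [a0, a1, e0, e1] at key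
      simp at key
      nlinarith [key, hε0, hlam0.symm]
    · -- A θe = (10,12,0): bribe at θb, i = 0 misreports L, j = 1
      have hupd : Function.update (![2+ε, 1, 2+ε] : Fin 3 → ℝ) 0 1 = ![1, 1, 2+ε] := by
        funext k; fin_cases k <;> simp [Function.update]
      have key := hB ![2+ε, 1, 2+ε] domB 0 1 1 (by simp)
      rw [hupd] at key
      simp only [utility] at key
      simp only [b0', b1', e0, e1] at key
      simp at key
      nlinarith [key, hε0, hlam0.symm]
end
end
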